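/- arXiv:2506.02504 — 8 statements merged into one kernel-verified Lean document; each statement's English description precedes it below -/
import Mathlib

section
/- Let n ≥ 1 and for i = 1,…,n let f_i : ℝ^{d₁} → ℝ be continuous, C_f-Lipschitz and ρ_f-weakly convex with ρ_f > 0, and let g_i : ℝ^d → ℝ^{d₁} be C_g-Lipschitz and L_g-smooth. Let ε > 0 and λ = ε/C_f, and assume λ < 1/ρ_f. If w ∈ ℝ^d satisfies ‖∇F_λ(w)‖ ≤ ε, then there exist points t_1,…,t_n ∈ ℝ^{d₁} and vectors y_1,…,y_n, where each y_i is a subgradient of f_i at t_i (with modulus ρ_f), such that ‖t_i − g_i(w)‖ ≤ ε for every i and ‖(1/n)∑_{i=1}^n (Dg_i(w))^* y_i‖ ≤ ε. -/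
/-!
Take for `t i` a proximal point of `f i` at `g i w` and put `y i = λ⁻¹ • (g i w - t i)`.
Comparing the proximal objective at `t i` with its values along the segment from `t i` to `z`
and using convexity of `f i + ρ/2 ‖·‖²` shows that `y i` is a `ρ`-weak subgradient of `f i` at
`t i`; testing this inequality in the direction `y i` against Lipschitz continuity gives
`‖y i‖ ≤ Cf`, hence `‖t i - g i w‖ = λ ‖y i‖ ≤ ε`. The same subgradient inequality bounds the
Moreau envelope from below by a quadratic touching it at `g i w` with slope `y i`, while the
candidate `t i` bounds it from above by another one, so the envelope has gradient `y i` there.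
The chain rule then gives `∇F_λ(w) = n⁻¹ • ∑ i, (Dg_i(w))^* (y i)`, whose norm is at most `ε`.
-/

open scoped RealInnerProductSpace BigOperators

open Filter Topology Set

theorem le_of_forall_le_add_mul {a b c : ℝ} (h : ∀ s ∈ Ioc (0 : ℝ) 1, a ≤ b + s * c) :
    a ≤ b := by
  have hcont : Continuous fun s : ℝ => b + s * c := by fun_prop
  have hlim : Tendsto (fun s => b + s * c) (𝓝[>] 0) (𝓝 b) := by
    simpa using (hcont.tendsto 0).mono_left nhdsWithin_le_nhds
  exact ge_of_tendsto hlim (by filter_upwards [Ioc_mem_nhdsGT zero_lt_one] using h)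

section Envelope

variable {E : Type*} [NormedAddCommGroup E] {f : E → ℝ} {lam : ℝ} {u t : E}

noncomputable def moreauEnvelope (f : E → ℝ) (lam : ℝ) (u : E) : ℝ :=
  ⨅ v, f v + ‖u - v‖ ^ 2 / (2 * lam)

def IsProxPoint (f : E → ℝ) (lam : ℝ) (u t : E) : Prop :=
  ∀ v, f t + ‖u - t‖ ^ 2 / (2 * lam) ≤ f v + ‖u - v‖ ^ 2 / (2 * lam)

theorem exists_isProxPoint [ProperSpace E] {K : NNReal} (hf : LipschitzWith K f) (hlam : 0 < lam)
    (u : E) : ∃ t, IsProxPoint f lam u t := by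
  refine (hf.continuous.add (by fun_prop)).exists_forall_le_of_isBounded u
    ((Metric.isBounded_closedBall (x := u) (r := 2 * lam * K)).subset fun v hv => ?_)
  have hv : f v + ‖u - v‖ ^ 2 / (2 * lam) ≤ f u := by simpa using hv
  have hlip : f u - f v ≤ K * ‖u - v‖ := by
    simpa [Real.dist_eq, dist_eq_norm] using (le_abs_self _).trans (hf.dist_le_mul u v)
  rw [Metric.mem_closedBall, dist_comm, dist_eq_norm]
  have : ‖u - v‖ ^ 2 ≤ 2 * lam * K * ‖u - v‖ := by
    have := (div_le_iff₀ (by positivity)).1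
      (show ‖u - v‖ ^ 2 / (2 * lam) ≤ K * ‖u - v‖ by linarith)
    linarith
  nlinarith [norm_nonneg (u - v), show 0 ≤ 2 * lam * K by positivity]

theorem IsProxPoint.moreauEnvelope_eq (h : IsProxPoint f lam u t) :
    moreauEnvelope f lam u = f t + ‖u - t‖ ^ 2 / (2 * lam) :=
  ciInf_eq_of_forall_ge_of_forall_gt_exists_lt h fun _ hw => ⟨t, hw⟩

end Envelope

section InnerProduct

variable {E : Type*} [NormedAddCommGroup E] [InnerProductSpace ℝ E] {f : E → ℝ} {lam ρ : ℝ}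
  {u t : E}

def IsWeakSubgradient (f : E → ℝ) (ρ : ℝ) (t y : E) : Prop :=
  ∀ z, f t + ⟪y, z - t⟫ - ρ / 2 * ‖z - t‖ ^ 2 ≤ f z

theorem IsProxPoint.isWeakSubgradient (hwc : ConvexOn ℝ univ fun x => f x + ρ / 2 * ‖x‖ ^ 2)
    (h : IsProxPoint f lam u t) : IsWeakSubgradient f ρ t (lam⁻¹ • (u - t)) := by
  intro z
  obtain ⟨p, rfl⟩ : ∃ p, z = t + p := ⟨z - t, by abel⟩
  rw [add_sub_cancel_left]
  refine le_of_forall_le_add_mul (c := ‖p‖ ^ 2 * (1 / (2 * lam) - ρ / 2)) fun s hs => ?_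
  have hmin := h (t + s • p)
  have hconv := hwc.2 (mem_univ t) (mem_univ (t + p)) (sub_nonneg.2 hs.2) hs.1.le
    (sub_add_cancel 1 s)
  rw [show (1 - s) • t + s • (t + p) = t + s • p by module] at hconv
  simp only [smul_eq_mul] at hconv
  rw [show u - (t + s • p) = (u - t) - s • p by abel, norm_sub_sq_real (u - t)] at hmin
  rw [norm_add_sq_real, norm_add_sq_real] at hconv
  simp only [norm_smul, inner_smul_right, real_inner_smul_left, Real.norm_of_nonneg hs.1.le,
    mul_pow] at hmin hconv ⊢
  refine le_of_mul_le_mul_left ?_ hs.1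
  linear_combination hmin + hconv

theorem IsWeakSubgradient.norm_le {K : NNReal} (hf : LipschitzWith K f) {y : E}
    (h : IsWeakSubgradient f ρ t y) : ‖y‖ ≤ K := by
  have hsq : ‖y‖ ^ 2 ≤ K * ‖y‖ := le_of_forall_le_add_mul (c := ρ / 2 * ‖y‖ ^ 2) fun s hs => by
    have hsub := h (t + s • y)
    have hlip : f (t + s • y) - f t ≤ K * (s * ‖y‖) := by
      simpa [Real.dist_eq, dist_eq_norm, norm_smul, abs_of_pos hs.1] using
        (le_abs_self _).trans (hf.dist_le_mul (t + s • y) t)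
    rw [add_sub_cancel_left, real_inner_smul_right, real_inner_self_eq_norm_sq, norm_smul,
      Real.norm_of_nonneg hs.1.le] at hsub
    refine le_of_mul_le_mul_left ?_ hs.1
    nlinarith
  nlinarith [norm_nonneg y, K.2]

theorem inner_le_young (x y : E) {c : ℝ} (hc : 0 < c) :
    c * (2 * ⟪x, y⟫) ≤ ‖x‖ ^ 2 + c ^ 2 * ‖y‖ ^ 2 := by
  have := norm_sub_sq_real x (c • y)
  rw [real_inner_smul_right, norm_smul, Real.norm_of_nonneg hc.le] at this
  nlinarith [sq_nonneg ‖x - c • y‖]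

theorem IsWeakSubgradient.le_moreau_objective (hlam : 0 < lam) (hρlam : ρ * lam < 1)
    (h : IsWeakSubgradient f ρ t (lam⁻¹ • (u - t))) (u' v : E) :
    f t + ‖u - t‖ ^ 2 / (2 * lam) + ⟪lam⁻¹ • (u - t), u' - u⟫
        - ρ / (2 * (1 - ρ * lam)) * ‖u' - u‖ ^ 2 ≤ f v + ‖u' - v‖ ^ 2 / (2 * lam) := by
  obtain ⟨δ, rfl⟩ : ∃ δ, u' = u + δ := ⟨u' - u, by abel⟩
  obtain ⟨η, rfl⟩ : ∃ η, v = t + η := ⟨v - t, by abel⟩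
  have hsub := h (t + η)
  have hc : 0 < 1 - ρ * lam := by linarith
  have hyoung := inner_le_young δ η hc
  simp only [add_sub_cancel_left, real_inner_smul_left] at hsub ⊢
  rw [show u + δ - (t + η) = (u - t) + (δ - η) by abel, norm_add_sq_real (u - t),
    norm_sub_sq_real δ η, inner_sub_right (u - t) δ η]
  -- Young's inequality with weight `1 - ρ λ` absorbs the `-ρ/2 ‖η‖²` of the subgradient bound.
  have hkey : 0 ≤ ρ / (2 * (1 - ρ * lam)) * ‖δ‖ ^ 2 - ρ / 2 * ‖η‖ ^ 2
      + (‖δ‖ ^ 2 - 2 * ⟪δ, η⟫ + ‖η‖ ^ 2) / (2 * lam) := by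
    rw [show ρ / (2 * (1 - ρ * lam)) * ‖δ‖ ^ 2 - ρ / 2 * ‖η‖ ^ 2
        + (‖δ‖ ^ 2 - 2 * ⟪δ, η⟫ + ‖η‖ ^ 2) / (2 * lam)
        = (‖δ‖ ^ 2 + (1 - ρ * lam) ^ 2 * ‖η‖ ^ 2 - (1 - ρ * lam) * (2 * ⟪δ, η⟫))
          / (2 * lam * (1 - ρ * lam)) by field_simp [hc.ne']; ring]
    exact div_nonneg (by linarith) (by positivity)
  linear_combination hsub + hkey

theorem IsProxPoint.hasGradientAt_moreauEnvelope [CompleteSpace E]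
    (hwc : ConvexOn ℝ univ fun x => f x + ρ / 2 * ‖x‖ ^ 2) (hlam : 0 < lam)
    (hρlam : ρ * lam < 1) (h : IsProxPoint f lam u t) :
    HasGradientAt (moreauEnvelope f lam) (lam⁻¹ • (u - t)) u := by
  have hlower := (h.isWeakSubgradient hwc).le_moreau_objective hlam hρlam
  set K := ρ / (2 * (1 - ρ * lam))
  have hbound : ∀ u',
      |moreauEnvelope f lam u' - moreauEnvelope f lam u - ⟪lam⁻¹ • (u - t), u' - u⟫|
        ≤ (1 / (2 * lam) + |K|) * ‖u' - u‖ ^ 2 := by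
    intro u'
    -- `hlower` also provides the `BddBelow` needed to use `t` as a competitor in the infimum.
    have hle : moreauEnvelope f lam u' ≤ f t + ‖u' - t‖ ^ 2 / (2 * lam) :=
      ciInf_le ⟨_, forall_mem_range.2 (hlower u')⟩ t
    have hge : _ ≤ moreauEnvelope f lam u' := le_ciInf (hlower u')
    rw [show u' - t = (u - t) + (u' - u) by abel, norm_add_sq_real] at hle
    simp only [h.moreauEnvelope_eq, real_inner_smul_left] at hge ⊢
    have hupper : (‖u - t‖ ^ 2 + 2 * ⟪u - t, u' - u⟫ + ‖u' - u‖ ^ 2) / (2 * lam)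
        = ‖u - t‖ ^ 2 / (2 * lam) + lam⁻¹ * ⟪u - t, u' - u⟫ + 1 / (2 * lam) * ‖u' - u‖ ^ 2 := by
      field_simp
    have hD := sq_nonneg ‖u' - u‖
    have hK := mul_le_mul_of_nonneg_right (le_abs_self K) hD
    have hinv := mul_nonneg (by positivity : 0 ≤ 1 / (2 * lam)) hD
    have habs := mul_nonneg (abs_nonneg K) hD
    rw [abs_le]
    constructor <;> linarith
  rw [hasGradientAt_iff_isLittleO]
  refine (Asymptotics.IsBigO.of_bound (1 / (2 * lam) + |K|)
    (Eventually.of_forall fun u' => by simpa using hbound u')).trans_isLittleO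
    ((Asymptotics.isLittleO_norm_pow_id one_lt_two).comp_tendsto
      (tendsto_sub_nhds_zero_iff.2 tendsto_id))

theorem HasGradientAt.const_mul_sum_comp {F ι : Type*} [NormedAddCommGroup F]
    [InnerProductSpace ℝ F] [CompleteSpace E] [CompleteSpace F] (s : Finset ι) (c : ℝ)
    {h : ι → F → ℝ} {g : ι → E → F} {y : ι → F} {G : ι → E →L[ℝ] F} {w : E}
    (hh : ∀ i ∈ s, HasGradientAt (h i) (y i) (g i w)) (hg : ∀ i ∈ s, HasFDerivAt (g i) (G i) w) :
    HasGradientAt (fun x => c * ∑ i ∈ s, h i (g i x))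
      (c • ∑ i ∈ s, ContinuousLinearMap.adjoint (G i) (y i)) w := by
  rw [hasGradientAt_iff_hasFDerivAt]
  refine ((HasFDerivAt.fun_sum fun i hi =>
    (hh i hi).hasFDerivAt.comp w (hg i hi)).const_mul c).congr_fderiv ?_
  ext x
  simp [ContinuousLinearMap.adjoint_inner_left]

end InnerProduct

theorem stmt4_general (d d₁ n : ℕ)
    (f : Fin n → EuclideanSpace ℝ (Fin d₁) → ℝ)
    (g : Fin n → EuclideanSpace ℝ (Fin d) → EuclideanSpace ℝ (Fin d₁))
    (Cf ρf ε lam : ℝ)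
    (hρf : 0 < ρf) (hCf : 0 < Cf) (hε : 0 < ε)
    (hlam : lam = ε / Cf) (hlam' : lam < 1 / ρf)
    (hf_lip : ∀ i (x y : EuclideanSpace ℝ (Fin d₁)), |f i x - f i y| ≤ Cf * ‖x - y‖)
    (hf_wc : ∀ i, ConvexOn ℝ Set.univ (fun x => f i x + ρf / 2 * ‖x‖ ^ 2))
    (hg_diff : ∀ i, Differentiable ℝ (g i))
    -- the outer-smoothed objective
    (Flam : EuclideanSpace ℝ (Fin d) → ℝ)
    (hFlam : ∀ w, Flam w = (n : ℝ)⁻¹ * ∑ i, ⨅ v, f i v + ‖g i w - v‖ ^ 2 / (2 * lam))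
    (w : EuclideanSpace ℝ (Fin d))
    (hw : ‖gradient Flam w‖ ≤ ε) :
    ∃ (t y : Fin n → EuclideanSpace ℝ (Fin d₁)),
      (∀ i z, f i z ≥ f i (t i) + ⟪y i, z - t i⟫ - ρf / 2 * ‖z - t i‖ ^ 2) ∧
      (∀ i, ‖t i - g i w‖ ≤ ε) ∧
      ‖(n : ℝ)⁻¹ • ∑ i, ContinuousLinearMap.adjoint (fderiv ℝ (g i) w) (y i)‖ ≤ ε := by
  have hlam0 : 0 < lam := hlam ▸ div_pos hε hCf
  have hρlam : ρf * lam < 1 := (lt_div_iff₀' hρf).1 hlam'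
  have hlip : ∀ i, LipschitzWith (Real.toNNReal Cf) (f i) := fun i =>
    LipschitzWith.of_dist_le_mul fun x y => by
      simpa [Real.dist_eq, dist_eq_norm, hCf.le] using hf_lip i x y
  choose t ht using fun i => exists_isProxPoint (hlip i) hlam0 (g i w)
  set y := fun i => lam⁻¹ • (g i w - t i)
  have hsub : ∀ i, IsWeakSubgradient (f i) ρf (t i) (y i) := fun i =>
    (ht i).isWeakSubgradient (hf_wc i)
  have hgrad : HasGradientAt Flam
      ((n : ℝ)⁻¹ • ∑ i, ContinuousLinearMap.adjoint (fderiv ℝ (g i) w) (y i)) w := by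
    rw [show Flam = fun x => (n : ℝ)⁻¹ * ∑ i, moreauEnvelope (f i) lam (g i x) from funext hFlam]
    exact .const_mul_sum_comp _ _
      (fun i _ => (ht i).hasGradientAt_moreauEnvelope (hf_wc i) hlam0 hρlam)
      (fun i _ => (hg_diff i w).hasFDerivAt)
  refine ⟨t, y, hsub, fun i => ?_, hgrad.gradient ▸ hw⟩
  calc ‖t i - g i w‖ = lam * ‖y i‖ := by
        rw [norm_smul, norm_inv, Real.norm_of_nonneg hlam0.le, mul_inv_cancel_left₀ hlam0.ne',
          norm_sub_rev]
    _ ≤ lam * Cf := by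
        gcongr
        simpa [hCf.le] using (hsub i).norm_le (hlip i)
    _ = ε := by rw [hlam, div_mul_cancel₀ _ hCf.ne']

/-- Under the outer-smoothing setup with `λ = ε/Cf < 1/ρf`, if
`‖∇F_λ(w)‖ ≤ ε` then `w` is an approximate `ε`-stationary solution of the original problem:
there are points `t i` and subgradients `y i` of `f i` at `t i` with `‖t i − g i w‖ ≤ ε`
and `‖(1/n) ∑ i, (Dg_i(w))^* y i‖ ≤ ε`. -/
theorem stmt4 (d d₁ n : ℕ) (hn : 1 ≤ n)
    (f : Fin n → EuclideanSpace ℝ (Fin d₁) → ℝ)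
    (g : Fin n → EuclideanSpace ℝ (Fin d) → EuclideanSpace ℝ (Fin d₁))
    (Cf ρf Cg Lg ε lam : ℝ)
    (hρf : 0 < ρf) (hCf : 0 < Cf) (hε : 0 < ε)
    (hlam : lam = ε / Cf) (hlam' : lam < 1 / ρf)
    (hf_cont : ∀ i, Continuous (f i))
    (hf_lip : ∀ i (x y : EuclideanSpace ℝ (Fin d₁)), |f i x - f i y| ≤ Cf * ‖x - y‖)
    (hf_wc : ∀ i, ConvexOn ℝ Set.univ (fun x => f i x + ρf / 2 * ‖x‖ ^ 2))
    (hg_lip : ∀ i (x y : EuclideanSpace ℝ (Fin d)), ‖g i x - g i y‖ ≤ Cg * ‖x - y‖)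
    (hg_diff : ∀ i, Differentiable ℝ (g i))
    (hg_smooth : ∀ i (x y : EuclideanSpace ℝ (Fin d)),
      ‖fderiv ℝ (g i) x - fderiv ℝ (g i) y‖ ≤ Lg * ‖x - y‖)
    -- the outer-smoothed objective
    (Flam : EuclideanSpace ℝ (Fin d) → ℝ)
    (hFlam : ∀ w, Flam w = (n : ℝ)⁻¹ * ∑ i, ⨅ v, f i v + ‖g i w - v‖ ^ 2 / (2 * lam))
    (w : EuclideanSpace ℝ (Fin d))
    (hw : ‖gradient Flam w‖ ≤ ε) :
    ∃ (t y : Fin n → EuclideanSpace ℝ (Fin d₁)),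
      (∀ i z, f i z ≥ f i (t i) + ⟪y i, z - t i⟫ - ρf / 2 * ‖z - t i‖ ^ 2) ∧
      (∀ i, ‖t i - g i w‖ ≤ ε) ∧
      ‖(n : ℝ)⁻¹ • ∑ i, ContinuousLinearMap.adjoint (fderiv ℝ (g i) w) (y i)‖ ≤ ε :=
  stmt4_general d d₁ n f g Cf ρf ε lam hρf hCf hε hlam hlam' hf_lip hf_wc hg_diff Flam hFlam w hw
end

section
/- Let g : ℝ^d → ℝ^{d₁} be C_g-Lipschitz and L_g-smooth, let δ > 0, and let w ∈ ℝ^d be such that ‖(Dg(w))^* u‖² ≥ δ‖u‖² for all u ∈ ℝ^{d₁}. Then for every w' ∈ ℝ^d with ‖w' − w‖ ≤ δ/(4·C_g·L_g), one has ‖(Dg(w'))^* u‖² ≥ (δ/2)‖u‖² for all u ∈ ℝ^{d₁}. -/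
/-!
Write `A = Dg(w)` and `A' = Dg(w')`. Lipschitz continuity gives `‖A‖, ‖A'‖ ≤ C_g`,
smoothness gives `‖A - A'‖ ≤ L_g ‖w - w'‖ ≤ δ / (4 C_g)`. Factoring a difference of squares,
`‖A^* u‖² - ‖A'^* u‖² ≤ ‖A - A'‖ (‖A‖ + ‖A'‖) ‖u‖² ≤ (δ/2) ‖u‖²`,
so the lower bound `δ ‖u‖²` at `w` loses at most `(δ/2) ‖u‖²` at `w'`.
-/

namespace ContinuousLinearMap

variable {𝕜 E F : Type*}

theorem sq_norm_apply_sub_sq_norm_apply_le [NontriviallyNormedField 𝕜]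
    [SeminormedAddCommGroup E] [NormedSpace 𝕜 E] [SeminormedAddCommGroup F] [NormedSpace 𝕜 F]
    (T S : E →L[𝕜] F) (x : E) :
    ‖T x‖ ^ 2 - ‖S x‖ ^ 2 ≤ ‖T - S‖ * (‖T‖ + ‖S‖) * ‖x‖ ^ 2 := by
  have hdiff : ‖T x‖ - ‖S x‖ ≤ ‖T - S‖ * ‖x‖ :=
    (norm_sub_norm_le _ _).trans (by simpa only [sub_apply] using (T - S).le_opNorm x)
  calc ‖T x‖ ^ 2 - ‖S x‖ ^ 2 = (‖T x‖ - ‖S x‖) * (‖T x‖ + ‖S x‖) := by ring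
    _ ≤ (‖T - S‖ * ‖x‖) * (‖T‖ * ‖x‖ + ‖S‖ * ‖x‖) :=
        mul_le_mul hdiff (add_le_add (T.le_opNorm x) (S.le_opNorm x)) (by positivity)
          (by positivity)
    _ = ‖T - S‖ * (‖T‖ + ‖S‖) * ‖x‖ ^ 2 := by ring

theorem sq_norm_adjoint_apply_sub_sq_norm_adjoint_apply_le [RCLike 𝕜]
    [NormedAddCommGroup E] [InnerProductSpace 𝕜 E] [CompleteSpace E]
    [NormedAddCommGroup F] [InnerProductSpace 𝕜 F] [CompleteSpace F]
    (A B : E →L[𝕜] F) (u : F) :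
    ‖adjoint A u‖ ^ 2 - ‖adjoint B u‖ ^ 2 ≤ ‖A - B‖ * (‖A‖ + ‖B‖) * ‖u‖ ^ 2 := by
  simpa only [← map_sub, LinearIsometryEquiv.norm_map] using
    sq_norm_apply_sub_sq_norm_apply_le (adjoint A) (adjoint B) u

end ContinuousLinearMap

theorem stmt5_general (d d₁ : ℕ)
    (g : EuclideanSpace ℝ (Fin d) → EuclideanSpace ℝ (Fin d₁))
    (Cg Lg δ : ℝ)
    (hg_lip : ∀ x y : EuclideanSpace ℝ (Fin d), ‖g x - g y‖ ≤ Cg * ‖x - y‖)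
    (hg_smooth : ∀ x y : EuclideanSpace ℝ (Fin d),
      ‖fderiv ℝ g x - fderiv ℝ g y‖ ≤ Lg * ‖x - y‖)
    (hδ : 0 < δ)
    (w : EuclideanSpace ℝ (Fin d))
    (hw : ∀ u : EuclideanSpace ℝ (Fin d₁),
      δ * ‖u‖ ^ 2 ≤ ‖ContinuousLinearMap.adjoint (fderiv ℝ g w) u‖ ^ 2) :
    ∀ w' : EuclideanSpace ℝ (Fin d), ‖w' - w‖ ≤ δ / (4 * Cg * Lg) →
      ∀ u : EuclideanSpace ℝ (Fin d₁),
        δ / 2 * ‖u‖ ^ 2 ≤ ‖ContinuousLinearMap.adjoint (fderiv ℝ g w') u‖ ^ 2 := by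
  intro w' hw' u
  rcases eq_or_ne w' w with rfl | hne
  · nlinarith [hw u, sq_nonneg ‖u‖]
  -- Away from `w' = w`, the hypotheses at `(w', w)` rule out the junk radius `δ / 0 = 0`.
  have hdist : 0 < ‖w' - w‖ := norm_pos_iff.2 (sub_ne_zero.2 hne)
  have hCg_nonneg : 0 ≤ Cg :=
    nonneg_of_mul_nonneg_left ((norm_nonneg _).trans (hg_lip w' w)) hdist
  have hCgLg : 0 < Cg * Lg := by
    linarith [(div_pos_iff_of_pos_left hδ).1 (hdist.trans_le hw')]
  have hCg : 0 < Cg := hCg_nonneg.lt_of_ne (by rintro rfl; simp at hCgLg)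
  have hLg : 0 < Lg := pos_of_mul_pos_right hCgLg hCg_nonneg
  have hlip : LipschitzWith ⟨Cg, hCg_nonneg⟩ g :=
    LipschitzWith.of_dist_le_mul fun x y => by rw [dist_eq_norm, dist_eq_norm]; exact hg_lip x y
  have hnorm : ∀ x, ‖fderiv ℝ g x‖ ≤ Cg := fun x => norm_fderiv_le_of_lipschitz ℝ hlip
  have hclose :
      ‖fderiv ℝ g w - fderiv ℝ g w'‖ * (‖fderiv ℝ g w‖ + ‖fderiv ℝ g w'‖) ≤ δ / 2 :=
    calc _ ≤ (Lg * ‖w' - w‖) * (2 * Cg) :=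
          mul_le_mul ((hg_smooth w w').trans_eq (by rw [norm_sub_rev]))
            (by linarith [hnorm w, hnorm w']) (by positivity) (by positivity)
      _ ≤ Lg * (δ / (4 * Cg * Lg)) * (2 * Cg) := by gcongr
      _ = δ / 2 := by field_simp; ring
  have hperturb := ContinuousLinearMap.sq_norm_adjoint_apply_sub_sq_norm_adjoint_apply_le
    (fderiv ℝ g w) (fderiv ℝ g w') u
  linarith [hw u, mul_le_mul_of_nonneg_right hclose (sq_nonneg ‖u‖)]

/-- If `g` is `Cg`-Lipschitz and `Lg`-smooth, `δ > 0`, and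
`‖(Dg(w))^* u‖² ≥ δ‖u‖²` for all `u`, then for every `w'` with
`‖w' − w‖ ≤ δ/(4·Cg·Lg)` one has `‖(Dg(w'))^* u‖² ≥ (δ/2)‖u‖²` for all `u`. -/
theorem stmt5 (d d₁ : ℕ)
    (g : EuclideanSpace ℝ (Fin d) → EuclideanSpace ℝ (Fin d₁))
    (Cg Lg δ : ℝ)
    (hg_lip : ∀ x y : EuclideanSpace ℝ (Fin d), ‖g x - g y‖ ≤ Cg * ‖x - y‖)
    (hg_diff : Differentiable ℝ g)
    (hg_smooth : ∀ x y : EuclideanSpace ℝ (Fin d),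
      ‖fderiv ℝ g x - fderiv ℝ g y‖ ≤ Lg * ‖x - y‖)
    (hδ : 0 < δ)
    (w : EuclideanSpace ℝ (Fin d))
    (hw : ∀ u : EuclideanSpace ℝ (Fin d₁),
      δ * ‖u‖ ^ 2 ≤ ‖ContinuousLinearMap.adjoint (fderiv ℝ g w) u‖ ^ 2) :
    ∀ w' : EuclideanSpace ℝ (Fin d), ‖w' - w‖ ≤ δ / (4 * Cg * Lg) →
      ∀ u : EuclideanSpace ℝ (Fin d₁),
        δ / 2 * ‖u‖ ^ 2 ≤ ‖ContinuousLinearMap.adjoint (fderiv ℝ g w') u‖ ^ 2 :=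
  stmt5_general d d₁ g Cg Lg δ hg_lip hg_smooth hδ w hw
end

section
/- Let g_1,…,g_n : ℝ^d → ℝ^{d₁} be C_g-Lipschitz and differentiable, let t_1,…,t_n ∈ ℝ^{d₁} be fixed, and let q(v) = (1/(2n))∑_{i=1}^n ‖t_i − g_i(v)‖². Then: (a) ‖∇q(v)‖² ≤ 2·C_g²·q(v) for every v ∈ ℝ^d; (b) if v ∈ ℝ^d satisfies ‖∑_{i=1}^n (Dg_i(v))^* u_i‖² ≥ (δ/2)·∑_{i=1}^n ‖u_i‖² for all u_1,…,u_n ∈ ℝ^{d₁}, then ‖∇q(v)‖² ≥ (δ/n)·q(v). -/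
/-! The gradient of `q` at `v` is `n⁻¹ ∑ᵢ (Dgᵢ(v))* rᵢ` with residuals `rᵢ = gᵢ(v) - tᵢ`.
For (a), a `C`-Lipschitz map has `‖Dgᵢ(v)*‖ = ‖Dgᵢ(v)‖ ≤ |C|`, and Cauchy–Schwarz
`‖∑ᵢ xᵢ‖² ≤ n ∑ᵢ ‖xᵢ‖²` gives `‖∇q(v)‖² ≤ C²/n · ∑ᵢ ‖rᵢ‖² = 2C² q(v)`.
For (b), apply the hypothesis to `uᵢ = rᵢ`. -/

open Finset ContinuousLinearMap InnerProductSpace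

theorem norm_sum_sq_le_card_mul_sum_norm_sq {ι E : Type*} [SeminormedAddCommGroup E]
    (s : Finset ι) (f : ι → E) : ‖∑ i ∈ s, f i‖ ^ 2 ≤ #s * ∑ i ∈ s, ‖f i‖ ^ 2 :=
  (pow_le_pow_left₀ (norm_nonneg _) (norm_sum_le s f) 2).trans (sq_sum_le_card_mul_sum_sq ..)

theorem norm_sum_apply_sq_le {ι 𝕜 E F : Type*} [Fintype ι] [NontriviallyNormedField 𝕜]
    [SeminormedAddCommGroup E] [NormedSpace 𝕜 E] [SeminormedAddCommGroup F] [NormedSpace 𝕜 F]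
    (A : ι → E →L[𝕜] F) {C : ℝ} (hA : ∀ i, ‖A i‖ ≤ C) (u : ι → E) :
    ‖∑ i, A i (u i)‖ ^ 2 ≤ Fintype.card ι * C ^ 2 * ∑ i, ‖u i‖ ^ 2 := by
  have hterm (i : ι) : ‖A i (u i)‖ ^ 2 ≤ C ^ 2 * ‖u i‖ ^ 2 := by
    rw [← mul_pow]
    exact pow_le_pow_left₀ (norm_nonneg _)
      ((A i).le_opNorm (u i) |>.trans (by gcongr; exact hA i)) 2
  calc ‖∑ i, A i (u i)‖ ^ 2 ≤ Fintype.card ι * ∑ i, ‖A i (u i)‖ ^ 2 :=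
        norm_sum_sq_le_card_mul_sum_norm_sq _ _
    _ ≤ Fintype.card ι * ∑ i, C ^ 2 * ‖u i‖ ^ 2 := by gcongr with i; exact hterm i
    _ = Fintype.card ι * C ^ 2 * ∑ i, ‖u i‖ ^ 2 := by rw [← mul_sum, mul_assoc]

theorem norm_fderiv_le_abs_of_norm_sub_le {𝕜 E F : Type*} [NontriviallyNormedField 𝕜]
    [NormedAddCommGroup E] [NormedSpace 𝕜 E] [NormedAddCommGroup F] [NormedSpace 𝕜 F]
    {f : E → F} {C : ℝ} (hf : ∀ x y, ‖f x - f y‖ ≤ C * ‖x - y‖) (x : E) :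
    ‖fderiv 𝕜 f x‖ ≤ |C| :=
  norm_fderiv_le_of_lip' 𝕜 (abs_nonneg C) <| .of_forall fun y =>
    (hf y x).trans (by gcongr; exact le_abs_self C)

section Gradient

variable {E F : Type*} [NormedAddCommGroup E] [InnerProductSpace ℝ E] [CompleteSpace E]
  [NormedAddCommGroup F] [InnerProductSpace ℝ F] [CompleteSpace F] {x : E}

theorem HasGradientAt.fun_sum {ι : Type*} {s : Finset ι} {f : ι → E → ℝ} {f' : ι → E}
    (h : ∀ i ∈ s, HasGradientAt (f i) (f' i) x) :
    HasGradientAt (fun y => ∑ i ∈ s, f i y) (∑ i ∈ s, f' i) x := by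
  rw [hasGradientAt_iff_hasFDerivAt, map_sum]
  exact HasFDerivAt.fun_sum fun i hi => hasGradientAt_iff_hasFDerivAt.mp (h i hi)

theorem HasGradientAt.const_mul {f : E → ℝ} {f' : E} (c : ℝ) (h : HasGradientAt f f' x) :
    HasGradientAt (fun y => c * f y) (c • f') x := by
  rw [hasGradientAt_iff_hasFDerivAt, map_smul]
  exact (hasGradientAt_iff_hasFDerivAt.mp h).const_mul c

theorem toDual_adjoint_apply (A : E →L[ℝ] F) (y : F) :
    toDual ℝ E (adjoint A y) = (innerSL ℝ y).comp A := by
  ext w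
  simp [adjoint_inner_left]

theorem HasFDerivAt.hasGradientAt_norm_sq {f : E → F} {f' : E →L[ℝ] F}
    (hf : HasFDerivAt f f' x) : HasGradientAt (‖f ·‖ ^ 2) ((2 : ℝ) • adjoint f' (f x)) x := by
  rw [hasGradientAt_iff_hasFDerivAt, map_smul, toDual_adjoint_apply, ofNat_smul_eq_nsmul]
  exact hf.norm_sq

theorem hasGradientAt_sum_norm_sq_sub {ι : Type*} [Fintype ι] {g : ι → E → F} (t : ι → F)
    (hg : ∀ i, DifferentiableAt ℝ (g i) x) :
    HasGradientAt (fun y => ∑ i, ‖t i - g i y‖ ^ 2)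
      ((2 : ℝ) • ∑ i, adjoint (fderiv ℝ (g i) x) (g i x - t i)) x := by
  rw [smul_sum]
  refine HasGradientAt.fun_sum fun i _ => ?_
  simpa [neg_sub] using ((hg i).hasFDerivAt.const_sub (t i)).hasGradientAt_norm_sq

end Gradient

theorem stmt6_general (d d₁ n : ℕ)
    (g : Fin n → EuclideanSpace ℝ (Fin d) → EuclideanSpace ℝ (Fin d₁))
    (t : Fin n → EuclideanSpace ℝ (Fin d₁))
    (Cg δ : ℝ)
    (hg_lip : ∀ i (x y : EuclideanSpace ℝ (Fin d)), ‖g i x - g i y‖ ≤ Cg * ‖x - y‖)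
    (hg_diff : ∀ i, Differentiable ℝ (g i))
    (q : EuclideanSpace ℝ (Fin d) → ℝ)
    (hq : ∀ v, q v = (1 / (2 * (n : ℝ))) * ∑ i, ‖t i - g i v‖ ^ 2) :
    (∀ v, ‖gradient q v‖ ^ 2 ≤ 2 * Cg ^ 2 * q v) ∧
    (∀ v : EuclideanSpace ℝ (Fin d),
      (∀ u : Fin n → EuclideanSpace ℝ (Fin d₁),
        δ / 2 * ∑ i, ‖u i‖ ^ 2 ≤
          ‖∑ i, ContinuousLinearMap.adjoint (fderiv ℝ (g i) v) (u i)‖ ^ 2) →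
      δ / n * q v ≤ ‖gradient q v‖ ^ 2) := by
  set c : ℝ := 1 / (2 * n)
  have hgrad (v) : ‖gradient q v‖ ^ 2 =
      (2 * c) ^ 2 * ‖∑ i, adjoint (fderiv ℝ (g i) v) (g i v - t i)‖ ^ 2 := by
    have hq' := (hasGradientAt_sum_norm_sq_sub t fun i => hg_diff i v).const_mul c
    rw [funext hq, hq'.gradient, smul_smul, norm_smul, mul_pow,
      Real.norm_eq_abs, sq_abs, mul_comm c]
  have hres (v) : ∑ i, ‖t i - g i v‖ ^ 2 = ∑ i, ‖g i v - t i‖ ^ 2 := by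
    simp only [norm_sub_rev]
  refine ⟨fun v => ?_, fun v hv => ?_⟩
  · have hD (i) : ‖adjoint (fderiv ℝ (g i) v)‖ ≤ |Cg| := by
      rw [LinearIsometryEquiv.norm_map]
      exact norm_fderiv_le_abs_of_norm_sub_le (hg_lip i) v
    -- an inequality, so that `n = 0` (where `c = 0`) needs no separate case
    have hcn : 2 * c * n ≤ 1 := calc
      2 * c * n = (n : ℝ)⁻¹ * n := by ring
      _ ≤ 1 := inv_mul_le_one
    calc ‖gradient q v‖ ^ 2
        ≤ (2 * c) ^ 2 * (n * |Cg| ^ 2 * ∑ i, ‖g i v - t i‖ ^ 2) := by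
          rw [hgrad]
          gcongr
          simpa using norm_sum_apply_sq_le _ hD (fun i => g i v - t i)
      _ = 2 * c * (2 * c * n * (Cg ^ 2 * ∑ i, ‖g i v - t i‖ ^ 2)) := by rw [sq_abs]; ring
      _ ≤ 2 * c * (Cg ^ 2 * ∑ i, ‖g i v - t i‖ ^ 2) := by
          have hX : 0 ≤ Cg ^ 2 * ∑ i, ‖g i v - t i‖ ^ 2 := by positivity
          exact mul_le_mul_of_nonneg_left (mul_le_of_le_one_left hX hcn) (by positivity)
      _ = 2 * Cg ^ 2 * q v := by rw [hq, hres]; ring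
  · calc δ / n * q v = (2 * c) ^ 2 * (δ / 2 * ∑ i, ‖g i v - t i‖ ^ 2) := by
          rw [hq, hres]; ring
      _ ≤ ‖gradient q v‖ ^ 2 := by
          rw [hgrad]
          gcongr
          exact hv _

/-- For `q(v) = (1/(2n)) ∑ i ‖t i − g i v‖²` with each `g i` `Cg`-Lipschitz and
differentiable: (a) `‖∇q(v)‖² ≤ 2·Cg²·q(v)`; (b) if
`‖∑ i (Dg_i(v))^* u_i‖² ≥ (δ/2) ∑ i ‖u_i‖²` for all `u`, then `‖∇q(v)‖² ≥ (δ/n)·q(v)`. -/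
theorem stmt6 (d d₁ n : ℕ) (hn : 1 ≤ n)
    (g : Fin n → EuclideanSpace ℝ (Fin d) → EuclideanSpace ℝ (Fin d₁))
    (t : Fin n → EuclideanSpace ℝ (Fin d₁))
    (Cg δ : ℝ)
    (hg_lip : ∀ i (x y : EuclideanSpace ℝ (Fin d)), ‖g i x - g i y‖ ≤ Cg * ‖x - y‖)
    (hg_diff : ∀ i, Differentiable ℝ (g i))
    (q : EuclideanSpace ℝ (Fin d) → ℝ)
    (hq : ∀ v, q v = (1 / (2 * (n : ℝ))) * ∑ i, ‖t i - g i v‖ ^ 2) :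
    (∀ v, ‖gradient q v‖ ^ 2 ≤ 2 * Cg ^ 2 * q v) ∧
    (∀ v : EuclideanSpace ℝ (Fin d),
      (∀ u : Fin n → EuclideanSpace ℝ (Fin d₁),
        δ / 2 * ∑ i, ‖u i‖ ^ 2 ≤
          ‖∑ i, ContinuousLinearMap.adjoint (fderiv ℝ (g i) v) (u i)‖ ^ 2) →
      δ / n * q v ≤ ‖gradient q v‖ ^ 2) :=
  stmt6_general d d₁ n g t Cg δ hg_lip hg_diff q hq
end

section
/- Let n ≥ 1 and for i = 1,…,n let f_i : ℝ^{d₁} → ℝ be convex, C_f-Lipschitz and nondecreasing, and let g_i : ℝ^d → ℝ^{d₁} be C_g-Lipschitz with each coordinate function of g_i being ρ_g-weakly convex. Let λ > 0. Then F_λ(w) = (1/n)∑_{i=1}^n f_{i,λ}(g_i(w)) is (√d₁·C_f·ρ_g)-weakly convex on ℝ^d, where f_{i,λ} is the Moreau envelope of f_i. -/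
open scoped RealInnerProductSpace BigOperators

open Set

/-!
The Moreau envelope `f_λ` of a convex, `C_f`-Lipschitz, nondecreasing `f` inherits all three
properties. Weak convexity of the coordinates of `g` gives, coordinatewise,
`g (a x + b y) ≤ a g x + b g y + δ 𝟙` with `δ = (ρ_g / 2) a b ‖x - y‖²`, and `δ ≥ 0` since a
Lipschitz function cannot be strongly convex. Monotonicity of `f_λ`, then its Lipschitz bound
along `δ 𝟙` (a vector of norm `δ √d₁`), then its convexity give
`f_λ (g (a x + b y)) ≤ a f_λ (g x) + b f_λ (g y) + √d₁ C_f δ`, which is `(√d₁ C_f ρ_g)`-weak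
convexity of `f_λ ∘ g`; averaging over `i` preserves it.
-/

noncomputable def moreauEnv {E : Type*} [NormedAddCommGroup E] (f : E → ℝ) (lam : ℝ) (u : E) : ℝ :=
  ⨅ v, f v + ‖u - v‖ ^ 2 / (2 * lam)

section MoreauEnvelope

variable {E : Type*} [NormedAddCommGroup E] {f : E → ℝ} {C lam : ℝ}

theorem bddBelow_moreauEnv (hf : ∀ x y, |f x - f y| ≤ C * ‖x - y‖) (hlam : 0 < lam) (u : E) :
    BddBelow (range fun v => f v + ‖u - v‖ ^ 2 / (2 * lam)) := by
  refine ⟨f u - lam * C ^ 2 / 2, forall_mem_range.mpr fun v => ?_⟩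
  have hfv := (abs_le.mp (hf u v)).2
  have hamgm : C * ‖u - v‖ - lam * C ^ 2 / 2 ≤ ‖u - v‖ ^ 2 / (2 * lam) := by
    rw [le_div_iff₀ (by positivity)]
    nlinarith [sq_nonneg (‖u - v‖ - lam * C)]
  linarith

theorem moreauEnv_le (hf : ∀ x y, |f x - f y| ≤ C * ‖x - y‖) (hlam : 0 < lam) (u v : E) :
    moreauEnv f lam u ≤ f v + ‖u - v‖ ^ 2 / (2 * lam) :=
  ciInf_le (bddBelow_moreauEnv hf hlam u) v

theorem moreauEnv_add_le (hf : ∀ x y, |f x - f y| ≤ C * ‖x - y‖) (hlam : 0 < lam) {h : E} {c : ℝ}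
    (hfh : ∀ v, f (v + h) ≤ f v + c) (u : E) :
    moreauEnv f lam (u + h) ≤ moreauEnv f lam u + c := by
  rw [← sub_le_iff_le_add]
  refine le_ciInf fun v => ?_
  have := moreauEnv_le hf hlam (u + h) (v + h)
  rw [add_sub_add_right_eq_sub] at this
  linarith [hfh v]

theorem moreauEnv_add_le_add_norm (hf : ∀ x y, |f x - f y| ≤ C * ‖x - y‖) (hlam : 0 < lam)
    (u h : E) : moreauEnv f lam (u + h) ≤ moreauEnv f lam u + C * ‖h‖ :=
  moreauEnv_add_le hf hlam (fun v => by simpa [add_comm] using (abs_le.mp (hf (v + h) v)).2) u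

theorem convexOn_moreauEnv [NormedSpace ℝ E] (hconv : ConvexOn ℝ univ f)
    (hf : ∀ x y, |f x - f y| ≤ C * ‖x - y‖) (hlam : 0 < lam) :
    ConvexOn ℝ univ (moreauEnv f lam) := by
  have hsq : ConvexOn ℝ univ fun x : E => ‖x‖ ^ 2 :=
    (convexOn_norm convex_univ).pow (fun _ _ => norm_nonneg _) 2
  refine ⟨convex_univ, fun x _ y _ a b ha hb hab => ?_⟩
  have key : ∀ vx vy, moreauEnv f lam (a • x + b • y) ≤
      a * (f vx + ‖x - vx‖ ^ 2 / (2 * lam)) + b * (f vy + ‖y - vy‖ ^ 2 / (2 * lam)) := by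
    intro vx vy
    have hfv : f (a • vx + b • vy) ≤ a * f vx + b * f vy :=
      hconv.2 (mem_univ vx) (mem_univ vy) ha hb hab
    have hnorm : ‖a • (x - vx) + b • (y - vy)‖ ^ 2 ≤ a * ‖x - vx‖ ^ 2 + b * ‖y - vy‖ ^ 2 :=
      hsq.2 (mem_univ _) (mem_univ _) ha hb hab
    calc moreauEnv f lam (a • x + b • y)
        ≤ f (a • vx + b • vy) + ‖a • (x - vx) + b • (y - vy)‖ ^ 2 / (2 * lam) := by
          rw [← show a • x + b • y - (a • vx + b • vy) = a • (x - vx) + b • (y - vy) by module]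
          exact moreauEnv_le hf hlam _ _
      _ ≤ a * f vx + b * f vy + (a * ‖x - vx‖ ^ 2 + b * ‖y - vy‖ ^ 2) / (2 * lam) := by
          gcongr
      _ = _ := by ring
  calc moreauEnv f lam (a • x + b • y)
      ≤ (⨅ vx, a * (f vx + ‖x - vx‖ ^ 2 / (2 * lam))) +
          ⨅ vy, b * (f vy + ‖y - vy‖ ^ 2 / (2 * lam)) := le_ciInf_add_ciInf key
    _ = a • moreauEnv f lam x + b • moreauEnv f lam y := by
      simp only [moreauEnv, smul_eq_mul, Real.mul_iInf_of_nonneg ha, Real.mul_iInf_of_nonneg hb]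

end MoreauEnvelope

theorem moreauEnv_mono {ι : Type*} [Fintype ι] {f : EuclideanSpace ℝ ι → ℝ} {C lam : ℝ}
    (hf : ∀ x y, |f x - f y| ≤ C * ‖x - y‖) (hlam : 0 < lam)
    (hmono : ∀ x y : EuclideanSpace ℝ ι, (∀ j, x j ≤ y j) → f x ≤ f y)
    {u u' : EuclideanSpace ℝ ι} (hu : ∀ j, u j ≤ u' j) :
    moreauEnv f lam u ≤ moreauEnv f lam u' := by
  simpa using moreauEnv_add_le hf hlam (h := u - u') (c := 0)
    (fun v => by simpa using hmono _ _ fun j => by simp [hu j]) u'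

theorem convexOn_univ_of_subsingleton {E : Type*} [AddCommGroup E] [Module ℝ E] [Subsingleton E]
    (f : E → ℝ) : ConvexOn ℝ univ f := by
  refine ⟨convex_univ, fun x _ y _ a b _ _ hab => le_of_eq ?_⟩
  rw [Subsingleton.elim y x, Subsingleton.elim (a • x + b • x) x, ← add_smul, hab, one_smul]

theorem convexOn_finset_sum {𝕜 E β ι : Type*} [Semiring 𝕜] [PartialOrder 𝕜] [AddCommMonoid E]
    [AddCommMonoid β] [PartialOrder β] [IsOrderedAddMonoid β] [SMul 𝕜 E] [Module 𝕜 β]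
    {s : Set E} {t : Finset ι} {F : ι → E → β} (hs : Convex 𝕜 s)
    (hF : ∀ i ∈ t, ConvexOn 𝕜 s (F i)) : ConvexOn 𝕜 s fun x => ∑ i ∈ t, F i x :=
  Finset.sum_fn t F ▸
    Finset.sum_induction F (ConvexOn 𝕜 s) (fun _ _ => ConvexOn.add) (convexOn_const 0 hs) hF

section InnerProductSpace

variable {E : Type*} [NormedAddCommGroup E] [InnerProductSpace ℝ E]

theorem convexOn_add_half_mul_norm_sq_iff {s : Set E} {f : E → ℝ} {ρ : ℝ} :
    ConvexOn ℝ s (fun x => f x + ρ / 2 * ‖x‖ ^ 2) ↔ StrongConvexOn s (-ρ) f := by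
  rw [strongConvexOn_iff_convex]
  congr! 2 with x
  ring

-- For `ρ < 0`, `h` would be strongly convex, which is incompatible with linear growth.
theorem nonneg_of_lipschitz_of_convexOn_add_half_mul_norm_sq [Nontrivial E] {h : E → ℝ}
    {C ρ : ℝ} (hlip : ∀ x y, |h x - h y| ≤ C * ‖x - y‖)
    (hconv : ConvexOn ℝ univ fun x => h x + ρ / 2 * ‖x‖ ^ 2) : 0 ≤ ρ := by
  by_contra! hρ
  set t := 2 * (|C| + 1) / -ρ with ht
  have ht0 : 0 < t := div_pos (by positivity) (neg_pos.mpr hρ)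
  obtain ⟨x, hx⟩ := exists_norm_eq E ht0.le
  have hmid := (convexOn_add_half_mul_norm_sq_iff.mp hconv).2 (mem_univ x) (mem_univ (-x))
    (by norm_num : (0 : ℝ) ≤ 1 / 2) (by norm_num : (0 : ℝ) ≤ 1 / 2) (by norm_num)
  have hsum : (1 / 2 : ℝ) • x + (1 / 2 : ℝ) • -x = 0 := by module
  have hdiff : ‖x - -x‖ = 2 * t := by
    rw [sub_neg_eq_add, ← two_smul ℝ x, norm_smul, hx, Real.norm_two]
  simp only [hsum, hdiff, smul_eq_mul] at hmid
  have h1 := (abs_le.mp (hlip x 0)).2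
  have h2 := (abs_le.mp (hlip (-x) 0)).2
  rw [sub_zero, hx] at h1
  rw [sub_zero, norm_neg, hx] at h2
  have hρt : ρ * t = -(2 * (|C| + 1)) := by rw [ht]; field_simp [hρ.ne]
  nlinarith [le_abs_self C]

theorem convexOn_moreauEnv_comp_add_half_mul_norm_sq {ι : Type*} [Fintype ι]
    {f : EuclideanSpace ℝ ι → ℝ} {g : E → EuclideanSpace ℝ ι} {C ρ lam : ℝ}
    (hlam : 0 < lam) (hρ : 0 ≤ ρ) (hf_conv : ConvexOn ℝ univ f)
    (hf_lip : ∀ x y, |f x - f y| ≤ C * ‖x - y‖)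
    (hf_mono : ∀ x y : EuclideanSpace ℝ ι, (∀ j, x j ≤ y j) → f x ≤ f y)
    (hg_wc : ∀ j, ConvexOn ℝ univ fun w => g w j + ρ / 2 * ‖w‖ ^ 2) :
    ConvexOn ℝ univ fun w => moreauEnv f lam (g w) + √(Fintype.card ι) * C * ρ / 2 * ‖w‖ ^ 2 := by
  rw [convexOn_add_half_mul_norm_sq_iff]
  refine ⟨convex_univ, fun x _ y _ a b ha hb hab => ?_⟩
  set δ := a * b * (ρ / 2 * ‖x - y‖ ^ 2)
  have hδ : 0 ≤ δ := by positivity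
  set one : EuclideanSpace ℝ ι := WithLp.toLp 2 fun _ => 1
  have hone : ‖one‖ = √(Fintype.card ι) := by simp [one, EuclideanSpace.norm_eq]
  have hcoord : ∀ j, g (a • x + b • y) j ≤ (a • g x + b • g y + δ • one) j := by
    intro j
    have := (convexOn_add_half_mul_norm_sq_iff.mp (hg_wc j)).2 (mem_univ x) (mem_univ y) ha hb hab
    simp only [smul_eq_mul] at this
    simp only [PiLp.add_apply, PiLp.smul_apply, smul_eq_mul, mul_one, δ, one]
    linarith
  calc moreauEnv f lam (g (a • x + b • y))
      ≤ moreauEnv f lam (a • g x + b • g y + δ • one) :=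
        moreauEnv_mono hf_lip hlam hf_mono hcoord
    _ ≤ moreauEnv f lam (a • g x + b • g y) + C * ‖δ • one‖ :=
        moreauEnv_add_le_add_norm hf_lip hlam _ _
    _ ≤ a • moreauEnv f lam (g x) + b • moreauEnv f lam (g y) + C * ‖δ • one‖ := by
        gcongr
        exact (convexOn_moreauEnv hf_conv hf_lip hlam).2 (mem_univ _) (mem_univ _) ha hb hab
    _ = _ := by
        rw [norm_smul, Real.norm_of_nonneg hδ, hone]
        ring

end InnerProductSpace

/-- With `f i` convex, `Cf`-Lipschitz and nondecreasing, and `g i` `Cg`-Lipschitz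
with `ρg`-weakly-convex coordinate functions, and `λ > 0`, the outer-smoothed objective
`F_λ(w) = (1/n) ∑ i f_{i,λ}(g i w)` is `(√d₁·Cf·ρg)`-weakly convex. -/
theorem stmt12 (d d₁ n : ℕ) (hn : 1 ≤ n)
    (f : Fin n → EuclideanSpace ℝ (Fin d₁) → ℝ)
    (g : Fin n → EuclideanSpace ℝ (Fin d) → EuclideanSpace ℝ (Fin d₁))
    (Cf Cg ρg lam : ℝ) (hlam : 0 < lam)
    (hf_conv : ∀ i, ConvexOn ℝ Set.univ (f i))
    (hf_lip : ∀ i (x y : EuclideanSpace ℝ (Fin d₁)), |f i x - f i y| ≤ Cf * ‖x - y‖)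
    (hf_mono : ∀ i (x y : EuclideanSpace ℝ (Fin d₁)), (∀ j, x j ≤ y j) → f i x ≤ f i y)
    (hg_lip : ∀ i (x y : EuclideanSpace ℝ (Fin d)), ‖g i x - g i y‖ ≤ Cg * ‖x - y‖)
    (hg_wc : ∀ i (j : Fin d₁),
      ConvexOn ℝ Set.univ (fun w : EuclideanSpace ℝ (Fin d) => g i w j + ρg / 2 * ‖w‖ ^ 2)) :
    ConvexOn ℝ Set.univ
      (fun w : EuclideanSpace ℝ (Fin d) =>
        ((n : ℝ)⁻¹ * ∑ i, ⨅ v, f i v + ‖g i w - v‖ ^ 2 / (2 * lam)) +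
          Real.sqrt d₁ * Cf * ρg / 2 * ‖w‖ ^ 2) := by
  have hterm : ∀ i, ConvexOn ℝ univ
      fun w => moreauEnv (f i) lam (g i w) + √d₁ * Cf * ρg / 2 * ‖w‖ ^ 2 := by
    intro i
    rcases subsingleton_or_nontrivial (EuclideanSpace ℝ (Fin d)) with hE | hE
    · exact convexOn_univ_of_subsingleton _
    rcases Nat.eq_zero_or_pos d₁ with rfl | hd₁
    · simpa using convexOn_moreauEnv_comp_add_half_mul_norm_sq (g := g i) hlam le_rfl
        (hf_conv i) (hf_lip i) (hf_mono i) (fun j => j.elim0)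
    have hg_coord_lip : ∀ x y, |g i x ⟨0, hd₁⟩ - g i y ⟨0, hd₁⟩| ≤ Cg * ‖x - y‖ := fun x y => by
      simpa [Real.norm_eq_abs] using (PiLp.norm_apply_le (g i x - g i y) _).trans (hg_lip i x y)
    have hρg := nonneg_of_lipschitz_of_convexOn_add_half_mul_norm_sq hg_coord_lip (hg_wc i _)
    simpa using convexOn_moreauEnv_comp_add_half_mul_norm_sq hlam hρg
      (hf_conv i) (hf_lip i) (hf_mono i) (hg_wc i)
  have hsum : ConvexOn ℝ univ
      fun w => ∑ i, (moreauEnv (f i) lam (g i w) + √d₁ * Cf * ρg / 2 * ‖w‖ ^ 2) :=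
    convexOn_finset_sum convex_univ fun i _ => hterm i
  refine (hsum.smul (inv_nonneg.mpr n.cast_nonneg)).congr fun w _ => ?_
  have hn0 : (n : ℝ) ≠ 0 := Nat.cast_ne_zero.mpr (Nat.one_le_iff_ne_zero.mp hn)
  simp only [Finset.sum_add_distrib, Finset.sum_const, Finset.card_univ, Fintype.card_fin,
    nsmul_eq_mul, smul_eq_mul]
  rw [mul_add, ← mul_assoc, inv_mul_cancel₀ hn0, one_mul]
  rfl
end

section
/- Let ρ > 0 and λ > 0, and let f : ℝ → ℝ be defined by f(x) = ρ·max(x, 0). Then the Moreau envelope f_λ is differentiable on ℝ with derivative f_λ'(x) = min(max(x, 0), λρ)/λ for every x ∈ ℝ. -/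
open scoped RealInnerProductSpace BigOperators

/-!
With `c = λρ`, the minimum of `2c·max(v, 0) + (u - v)²` over `v` is attained at the proximal
point `u - min(max(u, 0), c)` and equals `max(u, 0)² - max(u - c, 0)²`. Hence `f_λ(u) = (max(u, 0)² - max(u - λρ, 0)²) / (2λ)`, and since `t ↦ max(t, 0)²` is
differentiable with derivative `2·max(t, 0)`, so is `f_λ`, with derivative
`(max(x, 0) - max(x - λρ, 0)) / λ = min(max(x, 0), λρ) / λ`.
-/

open Set

theorem hasDerivAt_max_zero_sq (x : ℝ) :
    HasDerivAt (fun t : ℝ => max t 0 ^ 2) (2 * max x 0) x := by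
  rcases lt_trichotomy x 0 with hx | rfl | hx
  · rw [max_eq_right hx.le, mul_zero]
    refine (hasDerivAt_const x (0 : ℝ)).congr_of_eventuallyEq ?_
    filter_upwards [Iio_mem_nhds hx] with t (ht : t < 0)
    simp [ht.le]
  · have hleft : HasDerivWithinAt (fun t : ℝ => max t 0 ^ 2) 0 (Iic 0) 0 :=
      (hasDerivWithinAt_const (0 : ℝ) (Iic 0) (0 : ℝ)).congr
        (fun t (ht : t ≤ 0) => by simp [ht]) (by simp)
    have hright : HasDerivWithinAt (fun t : ℝ => max t 0 ^ 2) 0 (Ici 0) 0 := by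
      simpa using ((hasDerivAt_pow 2 (0 : ℝ)).hasDerivWithinAt (s := Ici 0)).congr
        (fun t (ht : 0 ≤ t) => by simp [ht]) (by simp)
    simpa [← hasDerivWithinAt_univ] using hleft.union hright
  · rw [max_eq_left hx.le]
    refine (hasDerivAt_pow 2 x).congr_of_eventuallyEq ?_ |>.congr_deriv (by ring)
    filter_upwards [Ioi_mem_nhds hx] with t (ht : 0 < t)
    simp [ht.le]

theorem max_zero_sub_max_sub_zero {c : ℝ} (hc : 0 ≤ c) (x : ℝ) :
    max x 0 - max (x - c) 0 = min (max x 0) c := by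
  grind

theorem max_zero_sq_sub_le {c : ℝ} (hc : 0 ≤ c) (u v : ℝ) :
    max u 0 ^ 2 - max (u - c) 0 ^ 2 ≤ 2 * c * max v 0 + (u - v) ^ 2 := by
  rcases max_cases u 0 with ⟨hu, hu'⟩ | ⟨hu, hu'⟩ <;>
  rcases max_cases (u - c) 0 with ⟨huc, huc'⟩ | ⟨huc, huc'⟩ <;>
  rcases max_cases v 0 with ⟨hv, hv'⟩ | ⟨hv, hv'⟩ <;>
  rw [hu, huc, hv] <;> nlinarith [sq_nonneg (u - v - c), sq_nonneg (u - v), sq_nonneg v]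

theorem max_zero_sq_sub_eq_at_prox {c : ℝ} (hc : 0 ≤ c) (u : ℝ) :
    max u 0 ^ 2 - max (u - c) 0 ^ 2
      = 2 * c * max (u - min (max u 0) c) 0 + (u - (u - min (max u 0) c)) ^ 2 := by
  grind

theorem isLeast_range_max_zero_add_sq {c : ℝ} (hc : 0 ≤ c) (u : ℝ) :
    IsLeast (range fun v : ℝ => 2 * c * max v 0 + (u - v) ^ 2)
      (max u 0 ^ 2 - max (u - c) 0 ^ 2) :=
  ⟨⟨_, (max_zero_sq_sub_eq_at_prox hc u).symm⟩, by
    rintro _ ⟨v, rfl⟩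
    exact max_zero_sq_sub_le hc u v⟩

theorem moreauEnvelope_max_zero_eq {ρ lam : ℝ} (hρ : 0 ≤ ρ) (hlam : 0 < lam) (u : ℝ) :
    ⨅ v : ℝ, ρ * max v 0 + ‖u - v‖ ^ 2 / (2 * lam)
      = (max u 0 ^ 2 - max (u - lam * ρ) 0 ^ 2) / (2 * lam) := by
  have hscale : (fun v : ℝ => ρ * max v 0 + ‖u - v‖ ^ 2 / (2 * lam))
      = (· / (2 * lam)) ∘ fun v : ℝ => 2 * (lam * ρ) * max v 0 + (u - v) ^ 2 := by
    funext v
    rw [Function.comp_apply, Real.norm_eq_abs, sq_abs]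
    field_simp
  have hmono : Monotone (· / (2 * lam) : ℝ → ℝ) := fun _ _ h =>
    div_le_div_of_nonneg_right h (by positivity)
  have hglb :=
    (hmono.map_isLeast (isLeast_range_max_zero_add_sq (mul_nonneg hlam.le hρ) u)).isGLB
  rw [← range_comp] at hglb
  rw [hscale, hglb.ciInf_eq]

/-- For `f(x) = ρ·max(x,0)` with `ρ, λ > 0`, the Moreau envelope `f_λ` is
differentiable on `ℝ` with derivative `f_λ'(x) = min(max(x,0), λρ)/λ`. -/
theorem stmt14 (ρ lam : ℝ) (hρ : 0 < ρ) (hlam : 0 < lam) :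
    ∀ x : ℝ,
      HasDerivAt (fun u : ℝ => ⨅ v : ℝ, ρ * max v 0 + ‖u - v‖ ^ 2 / (2 * lam))
        (min (max x 0) (lam * ρ) / lam) x := by
  intro x
  simp only [moreauEnvelope_max_zero_eq hρ.le hlam]
  refine (((hasDerivAt_max_zero_sq x).sub
    (hasDerivAt_max_zero_sq (x - lam * ρ)).comp_sub_const).div_const (2 * lam)).congr_deriv ?_
  rw [← max_zero_sub_max_sub_zero (mul_nonneg hlam.le hρ.le)]
  field_simp
end

section
/- Let F : ℝ^d → ℝ be differentiable with L-Lipschitz gradient, let 0 < β ≤ 1/2 and α > 0. Let w_{t−1}, v_t ∈ ℝ^d, set w_t = w_{t−1} − α·v_t, let G ∈ ℝ^d, and set v_{t+1} = (1−β)·v_t + β·G. Then ‖v_{t+1} − ∇F(w_t)‖² ≤ (1 − β/2)·‖v_t − ∇F(w_{t−1})‖² + (3·α²·L²/β)·‖v_t‖² + 3β·‖G − ∇F(w_t)‖². -/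
open scoped RealInnerProductSpace BigOperators

/-- One-step variance bound for the momentum update. If `F` is differentiable
with `L`-Lipschitz gradient, `0 < β ≤ 1/2`, `α > 0`, `w_t = w_{t−1} − α·v_t` and
`v_{t+1} = (1−β)·v_t + β·G`, then
`‖v_{t+1} − ∇F(w_t)‖² ≤ (1 − β/2)‖v_t − ∇F(w_{t−1})‖² + (3α²L²/β)‖v_t‖² + 3β‖G − ∇F(w_t)‖²`. -/
theorem stmt16 (d : ℕ) (F : EuclideanSpace ℝ (Fin d) → ℝ) (L β α : ℝ)
    (hdiff : Differentiable ℝ F)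
    (hLip : ∀ x y : EuclideanSpace ℝ (Fin d), ‖gradient F x - gradient F y‖ ≤ L * ‖x - y‖)
    (hβ0 : 0 < β) (hβ : β ≤ 1 / 2) (hα : 0 < α)
    (wPrev vt G : EuclideanSpace ℝ (Fin d)) :
    ‖((1 - β) • vt + β • G) - gradient F (wPrev - α • vt)‖ ^ 2 ≤
      (1 - β / 2) * ‖vt - gradient F wPrev‖ ^ 2 + 3 * α ^ 2 * L ^ 2 / β * ‖vt‖ ^ 2 +
        3 * β * ‖G - gradient F (wPrev - α • vt)‖ ^ 2 := by
  set g := gradient F (wPrev - α • vt) with hg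
  set gp := gradient F wPrev with hgp
  have hB : ‖gp - g‖ ≤ L * (α * ‖vt‖) := by
    have := hLip wPrev (wPrev - α • vt)
    simpa [sub_sub_cancel, norm_smul, abs_of_pos hα, mul_assoc] using this
  have hsplit : ((1 - β) • vt + β • G) - g = (1 - β) • (vt - g) + β • (G - g) := by
    module
  have h1 : ‖((1 - β) • vt + β • G) - g‖ ≤ (1 - β) * ‖vt - g‖ + β * ‖G - g‖ := by
    rw [hsplit]
    refine (norm_add_le _ _).trans ?_
    rw [norm_smul, norm_smul, Real.norm_eq_abs, Real.norm_eq_abs,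
      abs_of_nonneg (by linarith), abs_of_nonneg hβ0.le]
  have h2 : ‖vt - g‖ ≤ ‖vt - gp‖ + ‖gp - g‖ := by
    simpa using norm_sub_le_norm_sub_add_norm_sub vt gp g
  set A := ‖vt - gp‖
  set B := ‖gp - g‖
  set C := ‖G - g‖
  have hA : 0 ≤ A := norm_nonneg _
  have hB0 : 0 ≤ B := norm_nonneg _
  have hC : 0 ≤ C := norm_nonneg _
  have hB2 : B ^ 2 ≤ α ^ 2 * L ^ 2 * ‖vt‖ ^ 2 := by nlinarith [norm_nonneg vt]
  have hmain : ‖((1 - β) • vt + β • G) - g‖ ^ 2 ≤ ((1 - β) * (A + B) + β * C) ^ 2 := by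
    have hle : ‖((1 - β) • vt + β • G) - g‖ ≤ (1 - β) * (A + B) + β * C := by
      refine h1.trans ?_
      have : (1 - β) * ‖vt - g‖ ≤ (1 - β) * (A + B) :=
        mul_le_mul_of_nonneg_left h2 (by linarith)
      linarith
    exact pow_le_pow_left₀ (norm_nonneg _) hle 2
  refine hmain.trans ?_
  have h1β : (0:ℝ) ≤ 1 - β := by linarith
  have hscal : β * (((1 - β) * (A + B) + β * C) ^ 2) ≤
      β * (1 - β / 2) * A ^ 2 + 3 * B ^ 2 + 3 * β ^ 2 * C ^ 2 := by
    nlinarith [sq_nonneg (β * A - 2 * (1 - β) * B), sq_nonneg B,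
      mul_nonneg (mul_nonneg hβ0.le (by linarith : (0:ℝ) ≤ 3 - β)) (sq_nonneg B),
      mul_nonneg (sq_nonneg β) (sq_nonneg C),
      mul_nonneg (mul_nonneg (sq_nonneg β) h1β) (sq_nonneg (A + B - C))]
  have hdivB : 3 * B ^ 2 / β ≤ 3 * α ^ 2 * L ^ 2 / β * ‖vt‖ ^ 2 := by
    have : (3:ℝ) * B ^ 2 / β ≤ 3 * (α ^ 2 * L ^ 2 * ‖vt‖ ^ 2) / β := by gcongr
    calc (3:ℝ) * B ^ 2 / β ≤ 3 * (α ^ 2 * L ^ 2 * ‖vt‖ ^ 2) / β := this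
      _ = 3 * α ^ 2 * L ^ 2 / β * ‖vt‖ ^ 2 := by ring
  have := (div_le_div_iff_of_pos_right hβ0).mpr hscal
  rw [mul_div_cancel_left₀ _ hβ0.ne'] at this
  have heq : (β * (1 - β / 2) * A ^ 2 + 3 * B ^ 2 + 3 * β ^ 2 * C ^ 2) / β =
      (1 - β / 2) * A ^ 2 + 3 * B ^ 2 / β + 3 * β * C ^ 2 := by
    field_simp
  rw [heq] at this
  linarith
end

section
/- Let T, n, B₁, B₂ be positive integers and η, β, γ, L_F, L_f, C_f, C_g, σ₀, σ₁ be positive reals with β ≤ 2/7 and γ ≤ 1/2. Set C₁² = C_g² + σ₁²/B₂ and P = (n/(γB₁))·(5·L_f²·C₁² + 12·L_f²·C₁²·γ²·B₁/(β·n²)), and suppose 1/4 − 2·L_F²·η²/β² − 8·n·C_g²·P·η²/B₁ − 27·n·L_f²·C₁²·C_g²·η²/(B₁·β) ≥ 0. Let F_t (0 ≤ t ≤ T), G_t and M_{t+1}, W_{t+1} (0 ≤ t ≤ T−1), and V_t, U_t (1 ≤ t ≤ T+1) be nonnegative reals satisfying, for every 0 ≤ t ≤ T−1: (i) F_{t+1}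 ≤ F_t + (η/2)·V_{t+1} − (η/2)·G_t − (η/4)·M_{t+1}; (ii) V_{t+2} ≤ (1−β)·V_{t+1} + (2·L_F²·η²/β)·M_{t+1} + (3·L_f²·C₁²/n)·W_{t+1} + 2·β²·C_f²·(C_g² + σ₁²)/min(B₁,B₂) + 5·β·L_f²·C₁²·U_{t+2}; (iii) U_{t+2} ≤ (1 − γ·B₁/n)·U_{t+1} + (8·n·C_g²·η²/B₁)·M_{t+1} + 2·B₁·γ²·σ₁²/(n·B₂); (iv) W_{t+1} ≤ (4·B₁·γ²/n)·U_{t+1} + (9·n²·C_g²·η²/B₁)·M_{t+1} + 2·B₁·γ²·σ₀²/B₂. Then (1/T)·∑_{t=0}^{T−1} G_t ≤ (2/T)·((F_0 − F_T)/η + V_1/β + (P − 5·L_f²·C₁²)·U_1) + 4·β·C_f²·(C_g² + σ₁²)/min(B₁,B₂) + 4·B₁·γ²·σ₁²·P/(n·B₂) + 12·L_f²·C₁²·γ²·σ₀²·B₁/(β·n·B₂). -/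
open scoped BigOperators

private theorem stmt18_inv_mul {b c c' X : ℝ} (hb : b ≠ 0) (h : c = b * c') :
    b⁻¹ * (c * X) = c' * X := by
  rw [h]; field_simp

set_option maxHeartbeats 1000000 in
/-- Arithmetic lemma combining the four one-step recursions of SONEX into the
final averaged-stationarity bound. -/
theorem stmt18 (T n B₁ B₂ : ℕ) (hT : 0 < T) (hn : 0 < n) (hB₁ : 0 < B₁) (hB₂ : 0 < B₂)
    (η β γ LF Lf Cf Cg σ₀ σ₁ : ℝ)
    (hη : 0 < η) (hβ0 : 0 < β) (hγ0 : 0 < γ) (hLF : 0 < LF) (hLf : 0 < Lf)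
    (hCf : 0 < Cf) (hCg : 0 < Cg) (hσ₀ : 0 < σ₀) (hσ₁ : 0 < σ₁)
    (hβ : β ≤ 2 / 7) (hγ : γ ≤ 1 / 2)
    (C₁sq P : ℝ)
    (hC₁ : C₁sq = Cg ^ 2 + σ₁ ^ 2 / B₂)
    (hP : P = (n / (γ * B₁)) * (5 * Lf ^ 2 * C₁sq + 12 * Lf ^ 2 * C₁sq * γ ^ 2 * B₁ / (β * n ^ 2)))
    (hstep : 0 ≤ 1 / 4 - 2 * LF ^ 2 * η ^ 2 / β ^ 2 - 8 * n * Cg ^ 2 * P * η ^ 2 / B₁ -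
      27 * n * Lf ^ 2 * C₁sq * Cg ^ 2 * η ^ 2 / (B₁ * β))
    (F G M W V U : ℕ → ℝ)
    (hF : ∀ t ≤ T, 0 ≤ F t) (hG : ∀ t < T, 0 ≤ G t)
    (hM : ∀ t < T, 0 ≤ M (t + 1)) (hW : ∀ t < T, 0 ≤ W (t + 1))
    (hV : ∀ t, 1 ≤ t → t ≤ T + 1 → 0 ≤ V t) (hU : ∀ t, 1 ≤ t → t ≤ T + 1 → 0 ≤ U t)
    (h1 : ∀ t < T, F (t + 1) ≤ F t + η / 2 * V (t + 1) - η / 2 * G t - η / 4 * M (t + 1))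
    (h2 : ∀ t < T, V (t + 2) ≤ (1 - β) * V (t + 1) + (2 * LF ^ 2 * η ^ 2 / β) * M (t + 1) +
      (3 * Lf ^ 2 * C₁sq / n) * W (t + 1) +
      2 * β ^ 2 * Cf ^ 2 * (Cg ^ 2 + σ₁ ^ 2) / min (B₁ : ℝ) (B₂ : ℝ) +
      5 * β * Lf ^ 2 * C₁sq * U (t + 2))
    (h3 : ∀ t < T, U (t + 2) ≤ (1 - γ * B₁ / n) * U (t + 1) +
      (8 * n * Cg ^ 2 * η ^ 2 / B₁) * M (t + 1) + 2 * B₁ * γ ^ 2 * σ₁ ^ 2 / (n * B₂))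
    (h4 : ∀ t < T, W (t + 1) ≤ (4 * B₁ * γ ^ 2 / n) * U (t + 1) +
      (9 * n ^ 2 * Cg ^ 2 * η ^ 2 / B₁) * M (t + 1) + 2 * B₁ * γ ^ 2 * σ₀ ^ 2 / B₂) :
    (T : ℝ)⁻¹ * ∑ t ∈ Finset.range T, G t ≤
      2 / T * ((F 0 - F T) / η + V 1 / β + (P - 5 * Lf ^ 2 * C₁sq) * U 1) +
        4 * β * Cf ^ 2 * (Cg ^ 2 + σ₁ ^ 2) / min (B₁ : ℝ) (B₂ : ℝ) +
        4 * B₁ * γ ^ 2 * σ₁ ^ 2 * P / (n * B₂) +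
        12 * Lf ^ 2 * C₁sq * γ ^ 2 * σ₀ ^ 2 * B₁ / (β * n * B₂) := by
  obtain ⟨S, rfl⟩ : ∃ S, T = S + 1 := ⟨T - 1, by omega⟩
  have hn' : (0:ℝ) < n := by exact_mod_cast hn
  have hB₁' : (0:ℝ) < B₁ := by exact_mod_cast hB₁
  have hB₂' : (0:ℝ) < B₂ := by exact_mod_cast hB₂
  have hmin : (0:ℝ) < min (B₁:ℝ) (B₂:ℝ) := lt_min hB₁' hB₂'
  have hS0 : (0:ℝ) ≤ (S:ℝ) := Nat.cast_nonneg S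
  have hC₁pos : 0 < C₁sq := by rw [hC₁]; positivity
  have hC₁0 : 0 ≤ C₁sq := hC₁pos.le
  -- ============ abstract all coefficient constants ============
  obtain ⟨ca, hca⟩ : ∃ x : ℝ, x = 5 * Lf ^ 2 * C₁sq := ⟨_, rfl⟩
  obtain ⟨cb, hcb⟩ : ∃ x : ℝ, x = 12 * Lf ^ 2 * C₁sq * γ ^ 2 * (B₁:ℝ) / (β * (n:ℝ) ^ 2) := ⟨_, rfl⟩
  obtain ⟨cd, hcd⟩ : ∃ x : ℝ, x = 2 * LF ^ 2 * η ^ 2 / β := ⟨_, rfl⟩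
  obtain ⟨cA, hcA⟩ : ∃ x : ℝ, x = 2 * LF ^ 2 * η ^ 2 / β ^ 2 := ⟨_, rfl⟩
  obtain ⟨ce, hce⟩ : ∃ x : ℝ, x = 3 * Lf ^ 2 * C₁sq / (n:ℝ) := ⟨_, rfl⟩
  obtain ⟨cw, hcw⟩ : ∃ x : ℝ, x = 3 * Lf ^ 2 * C₁sq / (β * (n:ℝ)) := ⟨_, rfl⟩
  obtain ⟨cB, hcB⟩ : ∃ x : ℝ, x = 27 * (n:ℝ) * Lf ^ 2 * C₁sq * Cg ^ 2 * η ^ 2 / ((B₁:ℝ) * β) := ⟨_, rfl⟩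
  obtain ⟨cM0, hcM0⟩ : ∃ x : ℝ, x = 8 * (n:ℝ) * Cg ^ 2 * η ^ 2 / (B₁:ℝ) := ⟨_, rfl⟩
  obtain ⟨cs0, hcs0⟩ : ∃ x : ℝ, x = 2 * (B₁:ℝ) * γ ^ 2 * σ₁ ^ 2 / ((n:ℝ) * (B₂:ℝ)) := ⟨_, rfl⟩
  obtain ⟨q0, hq0⟩ : ∃ x : ℝ, x = γ * (B₁:ℝ) / (n:ℝ) := ⟨_, rfl⟩
  obtain ⟨K2, hK2⟩ : ∃ x : ℝ, x = 2 * β ^ 2 * Cf ^ 2 * (Cg ^ 2 + σ₁ ^ 2) / min (B₁:ℝ) (B₂:ℝ) := ⟨_, rfl⟩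
  obtain ⟨kv, hkv⟩ : ∃ x : ℝ, x = 2 * β * Cf ^ 2 * (Cg ^ 2 + σ₁ ^ 2) / min (B₁:ℝ) (B₂:ℝ) := ⟨_, rfl⟩
  obtain ⟨u1, hu1⟩ : ∃ x : ℝ, x = 4 * (B₁:ℝ) * γ ^ 2 / (n:ℝ) := ⟨_, rfl⟩
  obtain ⟨u2, hu2⟩ : ∃ x : ℝ, x = 9 * (n:ℝ) ^ 2 * Cg ^ 2 * η ^ 2 / (B₁:ℝ) := ⟨_, rfl⟩
  obtain ⟨u3, hu3⟩ : ∃ x : ℝ, x = 2 * (B₁:ℝ) * γ ^ 2 * σ₀ ^ 2 / (B₂:ℝ) := ⟨_, rfl⟩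
  obtain ⟨kw, hkw⟩ : ∃ x : ℝ, x = 6 * Lf ^ 2 * C₁sq * (B₁:ℝ) * γ ^ 2 * σ₀ ^ 2 / (β * (n:ℝ) * (B₂:ℝ)) := ⟨_, rfl⟩
  obtain ⟨cβa, hcβa⟩ : ∃ x : ℝ, x = 5 * β * Lf ^ 2 * C₁sq := ⟨_, rfl⟩
  obtain ⟨gc1, hgc1⟩ : ∃ x : ℝ, x = 4 * β * Cf ^ 2 * (Cg ^ 2 + σ₁ ^ 2) / min (B₁:ℝ) (B₂:ℝ) := ⟨_, rfl⟩
  obtain ⟨gc2, hgc2⟩ : ∃ x : ℝ, x = 4 * (B₁:ℝ) * γ ^ 2 * σ₁ ^ 2 * P / ((n:ℝ) * (B₂:ℝ)) := ⟨_, rfl⟩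
  obtain ⟨gc3, hgc3⟩ : ∃ x : ℝ, x = 12 * Lf ^ 2 * C₁sq * γ ^ 2 * σ₀ ^ 2 * (B₁:ℝ) / (β * (n:ℝ) * (B₂:ℝ)) := ⟨_, rfl⟩
  rw [← hcd, ← hce, ← hK2, ← hcβa] at h2
  rw [← hq0, ← hcM0, ← hcs0] at h3
  rw [← hu1, ← hu2, ← hu3] at h4
  rw [← hgc1, ← hgc2, ← hgc3, ← hca]
  -- ============ basic positivity ============
  have hPpos : 0 < P := by
    rw [hP]
    have hx : (0:ℝ) < (n:ℝ) / (γ * B₁) := by positivity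
    have hy : (0:ℝ) < 5 * Lf ^ 2 * C₁sq + 12 * Lf ^ 2 * C₁sq * γ ^ 2 * B₁ / (β * (n:ℝ) ^ 2) := by
      have e1 : (0:ℝ) < 5 * Lf ^ 2 * C₁sq := by
        have : (5:ℝ) * Lf ^ 2 * C₁sq = C₁sq * (5 * Lf ^ 2) := by ring
        rw [this]; exact mul_pos hC₁pos (by positivity)
      have e2 : (0:ℝ) ≤ 12 * Lf ^ 2 * C₁sq * γ ^ 2 * B₁ / (β * (n:ℝ) ^ 2) := by
        have : 12 * Lf ^ 2 * C₁sq * γ ^ 2 * (B₁:ℝ) / (β * (n:ℝ) ^ 2)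
            = C₁sq * (12 * Lf ^ 2 * γ ^ 2 * (B₁:ℝ) / (β * (n:ℝ) ^ 2)) := by ring
        rw [this]; exact mul_nonneg hC₁0 (by positivity)
      linarith
    exact mul_pos hx hy
  have hca0 : 0 ≤ ca := by
    rw [hca, show (5:ℝ) * Lf ^ 2 * C₁sq = C₁sq * (5 * Lf ^ 2) from by ring]
    exact mul_nonneg hC₁0 (by positivity)
  have hcb0 : 0 ≤ cb := by
    rw [hcb, show 12 * Lf ^ 2 * C₁sq * γ ^ 2 * (B₁:ℝ) / (β * (n:ℝ) ^ 2)
      = C₁sq * (12 * Lf ^ 2 * γ ^ 2 * (B₁:ℝ) / (β * (n:ℝ) ^ 2)) from by ring]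
    exact mul_nonneg hC₁0 (by positivity)
  have hcw0 : 0 ≤ cw := by
    rw [hcw, show 3 * Lf ^ 2 * C₁sq / (β * (n:ℝ)) = C₁sq * (3 * Lf ^ 2 / (β * (n:ℝ))) from by ring]
    exact mul_nonneg hC₁0 (by positivity)
  have hcB0 : 0 ≤ cB := by
    rw [hcB, show 27 * (n:ℝ) * Lf ^ 2 * C₁sq * Cg ^ 2 * η ^ 2 / ((B₁:ℝ) * β)
      = C₁sq * (27 * (n:ℝ) * Lf ^ 2 * Cg ^ 2 * η ^ 2 / ((B₁:ℝ) * β)) from by ring]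
    exact mul_nonneg hC₁0 (by positivity)
  have hcA0 : 0 ≤ cA := by rw [hcA]; positivity
  have hkv0 : 0 ≤ kv := by rw [hkv]; positivity
  have hkw0 : 0 ≤ kw := by
    rw [hkw, show 6 * Lf ^ 2 * C₁sq * (B₁:ℝ) * γ ^ 2 * σ₀ ^ 2 / (β * (n:ℝ) * (B₂:ℝ))
      = C₁sq * (6 * Lf ^ 2 * (B₁:ℝ) * γ ^ 2 * σ₀ ^ 2 / (β * (n:ℝ) * (B₂:ℝ))) from by ring]
    exact mul_nonneg hC₁0 (by positivity)
  have hcs00 : 0 ≤ cs0 := by rw [hcs0]; positivity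
  have hcM00 : 0 ≤ cM0 := by rw [hcM0]; positivity
  have hpcσ : 0 ≤ P * cs0 := mul_nonneg hPpos.le hcs00
  have hpcM0 : 0 ≤ P * cM0 := mul_nonneg hPpos.le hcM00
  -- key identity P * q0 = ca + cb
  have hq : P * q0 = ca + cb := by
    rw [hP, hq0, hca, hcb]; field_simp
  -- coefficient bounds from hstep
  have hc2 : cA + cB + P * cM0 ≤ 1/4 := by
    rw [hcA, hcB, hcM0]
    have e : P * (8 * (n:ℝ) * Cg ^ 2 * η ^ 2 / (B₁:ℝ)) = 8 * n * Cg ^ 2 * P * η ^ 2 / B₁ := by ring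
    linarith [hstep, e]
  have hpcM : P * cM0 ≤ 1/4 := by linarith [hc2, hcA0, hcB0]
  -- ================= Step A : sum of h1 =================
  have hA : ∑ t ∈ Finset.range (S+1), (η / 2 * G t + η / 4 * M (t+1) - η / 2 * V (t+1))
      ≤ ∑ t ∈ Finset.range (S+1), (F t - F (t+1)) := by
    apply Finset.sum_le_sum
    intro t ht
    have := h1 t (Finset.mem_range.mp ht)
    linarith
  have hA2 : η / 2 * (∑ t ∈ Finset.range (S+1), G t)
      + η / 4 * (∑ t ∈ Finset.range (S+1), M (t+1))
      - η / 2 * (∑ t ∈ Finset.range (S+1), V (t+1)) ≤ F 0 - F (S+1) := by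
    have e1 : ∑ t ∈ Finset.range (S+1), (F t - F (t+1)) = F 0 - F (S+1) :=
      Finset.sum_range_sub' F (S+1)
    have e2 : ∑ t ∈ Finset.range (S+1), (η / 2 * G t + η / 4 * M (t+1) - η / 2 * V (t+1))
        = η / 2 * (∑ t ∈ Finset.range (S+1), G t)
          + η / 4 * (∑ t ∈ Finset.range (S+1), M (t+1))
          - η / 2 * (∑ t ∈ Finset.range (S+1), V (t+1)) := by
      simp only [Finset.sum_sub_distrib, Finset.sum_add_distrib, ← Finset.mul_sum]
    rw [e2, e1] at hA
    exact hA
  have I1 : (∑ t ∈ Finset.range (S+1), G t) ≤ 2 * ((F 0 - F (S+1)) / η)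
      + (∑ t ∈ Finset.range (S+1), V (t+1)) - (1/2) * (∑ t ∈ Finset.range (S+1), M (t+1)) := by
    have h := mul_le_mul_of_nonneg_left hA2 (by positivity : (0:ℝ) ≤ 2 / η)
    have e : 2 / η * (η / 2 * (∑ t ∈ Finset.range (S+1), G t)
        + η / 4 * (∑ t ∈ Finset.range (S+1), M (t+1))
        - η / 2 * (∑ t ∈ Finset.range (S+1), V (t+1)))
        = (∑ t ∈ Finset.range (S+1), G t) + (1/2) * (∑ t ∈ Finset.range (S+1), M (t+1))
          - (∑ t ∈ Finset.range (S+1), V (t+1)) := by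
      have hne : η ≠ 0 := ne_of_gt hη
      field_simp
      ring
    have e' : 2 / η * (F 0 - F (S+1)) = 2 * ((F 0 - F (S+1)) / η) := by ring
    linarith [h, e, e']
  -- ================= Step B : V chain =================
  have hB : (∑ t ∈ Finset.range S, V (t+2)) - (1 - β) * (∑ t ∈ Finset.range S, V (t+1))
      - cd * (∑ t ∈ Finset.range S, M (t+1))
      - ce * (∑ t ∈ Finset.range S, W (t+1))
      - cβa * (∑ t ∈ Finset.range S, U (t+2)) ≤ (S:ℝ) * K2 := by
    have h := Finset.sum_le_sum (fun t (ht : t ∈ Finset.range S) => by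
      have h2t := h2 t (by have := Finset.mem_range.mp ht; omega)
      exact (by linarith : V (t+2) - (1 - β) * V (t+1) - cd * M (t+1) - ce * W (t+1)
        - cβa * U (t+2) ≤ K2))
    have eL : ∑ t ∈ Finset.range S, (V (t+2) - (1 - β) * V (t+1) - cd * M (t+1)
        - ce * W (t+1) - cβa * U (t+2))
        = (∑ t ∈ Finset.range S, V (t+2)) - (1 - β) * (∑ t ∈ Finset.range S, V (t+1))
        - cd * (∑ t ∈ Finset.range S, M (t+1))
        - ce * (∑ t ∈ Finset.range S, W (t+1))
        - cβa * (∑ t ∈ Finset.range S, U (t+2)) := by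
      simp only [Finset.sum_sub_distrib, ← Finset.mul_sum]
    have eR : ∑ _t ∈ Finset.range S, K2 = (S:ℝ) * K2 := by
      simp [Finset.sum_const, nsmul_eq_mul]
    rw [eL, eR] at h
    exact h
  have rV1 : ∑ t ∈ Finset.range (S+1), V (t+1)
      = (∑ t ∈ Finset.range S, V (t+2)) + V 1 :=
    Finset.sum_range_succ' (fun t => V (t+1)) S
  have rV2 : ∑ t ∈ Finset.range (S+1), V (t+1)
      = (∑ t ∈ Finset.range S, V (t+1)) + V (S+1) := Finset.sum_range_succ _ S
  have hVS : 0 ≤ V (S+1) := hV (S+1) (by omega) (by omega)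
  have hV1 : 0 ≤ V 1 := hV 1 le_rfl (by omega)
  have J2 : β * (∑ t ∈ Finset.range (S+1), V (t+1)) ≤ V 1
      + cd * (∑ t ∈ Finset.range S, M (t+1))
      + ce * (∑ t ∈ Finset.range S, W (t+1))
      + cβa * (∑ t ∈ Finset.range S, U (t+2))
      + (S:ℝ) * K2 := by
    have rv2β : β * (∑ t ∈ Finset.range (S+1), V (t+1))
        = β * (∑ t ∈ Finset.range S, V (t+1)) + β * V (S+1) := by rw [rV2]; ring
    have hb1 : 0 ≤ (1 - β) * V (S+1) := mul_nonneg (by linarith) hVS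
    linarith [hB, rV1, rv2β, hb1]
  have I2 : (∑ t ∈ Finset.range (S+1), V (t+1)) ≤ V 1 / β
      + cA * (∑ t ∈ Finset.range S, M (t+1))
      + cw * (∑ t ∈ Finset.range S, W (t+1))
      + ca * (∑ t ∈ Finset.range S, U (t+2))
      + (S:ℝ) * kv := by
    have h := mul_le_mul_of_nonneg_left J2 (le_of_lt (inv_pos.mpr hβ0))
    have hne : β ≠ 0 := ne_of_gt hβ0
    have hnne : (n:ℝ) ≠ 0 := ne_of_gt hn'
    have e1 : β⁻¹ * (β * (∑ t ∈ Finset.range (S+1), V (t+1)))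
        = ∑ t ∈ Finset.range (S+1), V (t+1) := by
      rw [← mul_assoc, inv_mul_cancel₀ hne, one_mul]
    have ea : β⁻¹ * V 1 = V 1 / β := by rw [div_eq_mul_inv]; ring
    have hbd : cd = β * cA := by rw [hcd, hcA]; field_simp
    have hbe : ce = β * cw := by rw [hce, hcw]; field_simp
    have hba : cβa = β * ca := by rw [hcβa, hca]; ring
    have hbK : K2 = β * kv := by rw [hK2, hkv, pow_two]; ring
    have eb : β⁻¹ * (cd * (∑ t ∈ Finset.range S, M (t+1)))
        = cA * (∑ t ∈ Finset.range S, M (t+1)) := stmt18_inv_mul hne hbd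
    have ec : β⁻¹ * (ce * (∑ t ∈ Finset.range S, W (t+1)))
        = cw * (∑ t ∈ Finset.range S, W (t+1)) := stmt18_inv_mul hne hbe
    have ed : β⁻¹ * (cβa * (∑ t ∈ Finset.range S, U (t+2)))
        = ca * (∑ t ∈ Finset.range S, U (t+2)) := stmt18_inv_mul hne hba
    have ee : β⁻¹ * ((S:ℝ) * K2) = (S:ℝ) * kv := by
      rw [mul_comm (S:ℝ) K2, stmt18_inv_mul hne hbK, mul_comm]
    linarith [h, e1, ea, eb, ec, ed, ee]
  -- ================= Step C : W sums =================
  have I3 : (∑ t ∈ Finset.range S, W (t+1))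
      ≤ u1 * (∑ t ∈ Finset.range S, U (t+1))
      + u2 * (∑ t ∈ Finset.range S, M (t+1))
      + (S:ℝ) * u3 := by
    have h := Finset.sum_le_sum (fun t (ht : t ∈ Finset.range S) =>
      h4 t (by have := Finset.mem_range.mp ht; omega))
    have e : ∑ t ∈ Finset.range S, (u1 * U (t+1) + u2 * M (t+1) + u3)
        = u1 * (∑ t ∈ Finset.range S, U (t+1))
        + u2 * (∑ t ∈ Finset.range S, M (t+1)) + (S:ℝ) * u3 := by
      simp only [Finset.sum_add_distrib, ← Finset.mul_sum, Finset.sum_const, nsmul_eq_mul, Finset.card_range]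
    rw [e] at h
    exact h
  have I3' : cw * (∑ t ∈ Finset.range S, W (t+1))
      ≤ cb * (∑ t ∈ Finset.range S, U (t+1))
      + cB * (∑ t ∈ Finset.range S, M (t+1))
      + (S:ℝ) * kw := by
    have h := mul_le_mul_of_nonneg_left I3 hcw0
    have hne : β ≠ 0 := ne_of_gt hβ0
    have hnne : (n:ℝ) ≠ 0 := ne_of_gt hn'
    have hb1ne : (B₁:ℝ) ≠ 0 := ne_of_gt hB₁'
    have hb2ne : (B₂:ℝ) ≠ 0 := ne_of_gt hB₂'
    have g1 : cw * u1 = cb := by rw [hcw, hu1, hcb]; field_simp; ring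
    have g2 : cw * u2 = cB := by rw [hcw, hu2, hcB]; field_simp; ring
    have g3 : cw * u3 = kw := by rw [hcw, hu3, hkw]; field_simp; ring
    have f1 : cw * (u1 * (∑ t ∈ Finset.range S, U (t+1)))
        = cb * (∑ t ∈ Finset.range S, U (t+1)) := by rw [← mul_assoc, g1]
    have f2 : cw * (u2 * (∑ t ∈ Finset.range S, M (t+1)))
        = cB * (∑ t ∈ Finset.range S, M (t+1)) := by rw [← mul_assoc, g2]
    have f3 : cw * ((S:ℝ) * u3) = (S:ℝ) * kw := by
      rw [mul_comm (S:ℝ) u3, ← mul_assoc, g3, mul_comm]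
    linarith [h, f1, f2, f3]
  -- ================= Step D : U telescoping =================
  have hs3 : (∑ t ∈ Finset.range S, U (t+2))
      ≤ (1 - q0) * (∑ t ∈ Finset.range S, U (t+1))
      + cM0 * (∑ t ∈ Finset.range S, M (t+1))
      + (S:ℝ) * cs0 := by
    have h := Finset.sum_le_sum (fun t (ht : t ∈ Finset.range S) =>
      h3 t (by have := Finset.mem_range.mp ht; omega))
    have e : ∑ t ∈ Finset.range S, ((1 - q0) * U (t+1) + cM0 * M (t+1) + cs0)
        = (1 - q0) * (∑ t ∈ Finset.range S, U (t+1))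
        + cM0 * (∑ t ∈ Finset.range S, M (t+1)) + (S:ℝ) * cs0 := by
      simp only [Finset.sum_add_distrib, ← Finset.mul_sum, Finset.sum_const, nsmul_eq_mul, Finset.card_range]
    rw [e] at h
    exact h
  have hsum3 := mul_le_mul_of_nonneg_left hs3 hPpos.le
  have rU : (∑ t ∈ Finset.range S, U (t+2)) + U 1
      = (∑ t ∈ Finset.range S, U (t+1)) + U (S+1) := by
    have e1 : ∑ t ∈ Finset.range (S+1), U (t+1)
        = (∑ t ∈ Finset.range S, U (t+2)) + U 1 :=
      Finset.sum_range_succ' (fun t => U (t+1)) S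
    have e2 : ∑ t ∈ Finset.range (S+1), U (t+1)
        = (∑ t ∈ Finset.range S, U (t+1)) + U (S+1) := Finset.sum_range_succ _ S
    linarith [e1, e2]
  have I4 : ca * (∑ t ∈ Finset.range S, U (t+2))
      + cb * (∑ t ∈ Finset.range S, U (t+1))
      ≤ (P - ca) * (U 1 - U (S+1))
      + P * cM0 * (∑ t ∈ Finset.range S, M (t+1))
      + (S:ℝ) * (P * cs0) := by
    have z1 : (ca + cb - P * q0) * (∑ t ∈ Finset.range S, U (t+1)) = 0 := by
      rw [show ca + cb - P * q0 = 0 from by linarith [hq], zero_mul]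
    have z2 : (P - ca) * ((∑ t ∈ Finset.range S, U (t+1)) + U (S+1)
        - U 1 - (∑ t ∈ Finset.range S, U (t+2))) = 0 := by
      rw [show (∑ t ∈ Finset.range S, U (t+1)) + U (S+1)
        - U 1 - (∑ t ∈ Finset.range S, U (t+2)) = 0 from by linarith [rU], mul_zero]
    linarith [hsum3, z1, z2]
  -- ================= Step E : boundary bounds =================
  have IE : ∀ s, s < S + 1 → (ca - P) * U (s+1) ≤ P * cM0 * M (s+1) + P * cs0 := by
    intro s hs
    have h3s := h3 s hs
    have hU2 : 0 ≤ U (s+2) := hU (s+2) (by omega) (by omega)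
    have hU1' : 0 ≤ U (s+1) := hU (s+1) (by omega) (by omega)
    have w1 : q0 * U (s+1) ≤ U (s+1) + cM0 * M (s+1) + cs0 := by linarith [h3s, hU2]
    have w2 := mul_le_mul_of_nonneg_left w1 hPpos.le
    have w3 : 0 ≤ cb * U (s+1) := mul_nonneg hcb0 hU1'
    have z1 : P * q0 * U (s+1) = (ca + cb) * U (s+1) := by rw [hq]
    linarith [w2, w3, z1]
  have IE0 : (ca - P) * U 1 ≤ P * cM0 * M 1 + P * cs0 := by
    have h0 := IE 0 (by omega)
    simpa using h0
  have IES : (ca - P) * U (S+1) ≤ P * cM0 * M (S+1) + P * cs0 := IE S (by omega)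
  -- ================= M facts =================
  have hM1 : 0 ≤ M 1 := hM 0 (by omega)
  have hMS : 0 ≤ M (S+1) := hM S (by omega)
  have hSM'0 : 0 ≤ ∑ t ∈ Finset.range S, M (t+1) :=
    Finset.sum_nonneg fun i hi => hM i (by have := Finset.mem_range.mp hi; omega)
  have rM : ∑ t ∈ Finset.range (S+1), M (t+1)
      = (∑ t ∈ Finset.range S, M (t+1)) + M (S+1) := Finset.sum_range_succ _ S
  have hM1le : M 1 ≤ ∑ t ∈ Finset.range (S+1), M (t+1) := by
    have := Finset.single_le_sum (f := fun t => M (t+1))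
      (fun i hi => hM i (Finset.mem_range.mp hi)) (Finset.mem_range.mpr (by omega : 0 < S+1))
    simpa using this
  -- product hints for M absorption
  have p1 : 0 ≤ (1/4 - (cA + cB + P * cM0)) * (∑ t ∈ Finset.range S, M (t+1)) :=
    mul_nonneg (by linarith [hc2]) hSM'0
  have p2 : 0 ≤ (1/4 - P * cM0) * M 1 := mul_nonneg (by linarith [hpcM]) hM1
  have p3 : 0 ≤ (1/4 - P * cM0) * M (S+1) := mul_nonneg (by linarith [hpcM]) hMS
  -- constant slack hints
  have hkvS : (0:ℝ) ≤ (S:ℝ) * kv := mul_nonneg hS0 hkv0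
  have hkwS : (0:ℝ) ≤ (S:ℝ) * kw := mul_nonneg hS0 hkw0
  have hcσS : (0:ℝ) ≤ (S:ℝ) * (P * cs0) := mul_nonneg hS0 hpcσ
  have hV1β : (0:ℝ) ≤ V 1 / β := div_nonneg hV1 hβ0.le
  -- goal-constant relations
  have hg1 : gc1 = 2 * kv := by rw [hgc1, hkv]; ring
  have hg2 : gc2 = 2 * (P * cs0) := by rw [hgc2, hcs0]; ring
  have hg3 : gc3 = 2 * kw := by rw [hgc3, hkw]; ring
  have hg1S : (S:ℝ) * gc1 = (S:ℝ) * (2 * kv) := by rw [hg1]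
  have hg2S : (S:ℝ) * gc2 = (S:ℝ) * (2 * (P * cs0)) := by rw [hg2]
  have hg3S : (S:ℝ) * gc3 = (S:ℝ) * (2 * kw) := by rw [hg3]
  -- ================= assemble MAIN =================
  have MAIN : (∑ t ∈ Finset.range (S+1), G t) ≤ 2 * ((F 0 - F (S+1)) / η)
      + 2 * (V 1 / β) + 2 * ((P - ca) * U 1)
      + ((S:ℝ) + 1) * (gc1 + gc2 + gc3) := by
    linarith [I1, I2, I3', I4, IE0, IES, p1, p2, p3, hM1le, rM, hV1β,
      hkv0, hkvS, hkw0, hkwS, hpcσ, hcσS, hg1, hg2, hg3, hg1S, hg2S, hg3S]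
  -- ================= conclude =================
  have hT1 : (0:ℝ) < (S:ℝ) + 1 := by positivity
  have hcast : ((S+1 : ℕ) : ℝ) = (S:ℝ) + 1 := by push_cast; ring
  rw [hcast, inv_mul_le_iff₀ hT1]
  have g1 : ((S:ℝ) + 1) * (2 / ((S:ℝ)+1) * ((F 0 - F (S+1)) / η + V 1 / β
        + (P - ca) * U 1))
      = 2 * ((F 0 - F (S+1)) / η) + 2 * (V 1 / β) + 2 * ((P - ca) * U 1) := by
    have hne : (S:ℝ) + 1 ≠ 0 := ne_of_gt hT1
    field_simp
  linarith [MAIN, g1]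
end

section
/- Let g : ℝ^d → ℝ be C-Lipschitz and ρ-weakly convex, let b ∈ ℝ^d, and let v be a subgradient of g at b (with modulus ρ). Then for all a, z ∈ ℝ^d and every M > 0: g(a) − g(z) − ⟨v, a − z⟩ ≤ 8·C²/M + (M/8)·‖a − b‖² + (ρ/2)·‖z − b‖². -/
/-!
Split `g a - g z - ⟪v, a - z⟫` at `b`. The part `g b - g z + ⟪v, z - b⟫` is at most
`ρ/2 ‖z - b‖²` by the subgradient inequality. For the part `g a - g b - ⟪v, a - b⟫`, the
subgradient inequality along rays from `b` combined with the Lipschitz bound forces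
`⟪v, w⟫ ≤ C‖w‖` for all `w`, so it is at most `2C‖a - b‖`,
and AM-GM trades this for `8C²/M + (M/8)‖a - b‖²`.
-/

open scoped RealInnerProductSpace

open Filter Topology

/-- Dividing the subgradient inequality at `b + t • w` by `t` and letting `t → 0⁺` kills the
quadratic term. -/
theorem inner_le_mul_norm_of_weak_subgradient {E : Type*} [NormedAddCommGroup E]
    [InnerProductSpace ℝ E] {g : E → ℝ} {b v : E} {C ρ : ℝ}
    (hg : ∀ x, g x - g b ≤ C * ‖x - b‖)
    (hv : ∀ z, g b + ⟪v, z - b⟫ - ρ / 2 * ‖z - b‖ ^ 2 ≤ g z) (w : E) :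
    ⟪v, w⟫ ≤ C * ‖w‖ := by
  have h_pos : ∀ t : ℝ, 0 < t → ⟪v, w⟫ ≤ C * ‖w‖ + t * (ρ / 2 * ‖w‖ ^ 2) := by
    intro t ht
    have hsub := hv (b + t • w)
    have hlip := hg (b + t • w)
    have h_norm : ‖t • w‖ = t * ‖w‖ := by rw [norm_smul, Real.norm_of_nonneg ht.le]
    simp only [add_sub_cancel_left, real_inner_smul_right, h_norm] at hsub hlip
    have : t * ⟪v, w⟫ ≤ t * (C * ‖w‖ + t * (ρ / 2 * ‖w‖ ^ 2)) := by nlinarith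
    exact le_of_mul_le_mul_left this ht
  have h_lim : Tendsto (fun t : ℝ => C * ‖w‖ + t * (ρ / 2 * ‖w‖ ^ 2)) (𝓝[>] 0)
      (𝓝 (C * ‖w‖)) := by
    refine tendsto_nhdsWithin_of_tendsto_nhds ?_
    exact (continuous_const.add (continuous_id.mul continuous_const)).tendsto' _ _ (by simp)
  exact ge_of_tendsto h_lim (eventually_nhdsWithin_of_forall fun t ht => h_pos t ht)

theorem two_mul_le_sq_div_add_mul_sq {ε : ℝ} (hε : 0 < ε) (a b : ℝ) :
    2 * a * b ≤ a ^ 2 / ε + ε * b ^ 2 := by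
  rw [div_add' _ _ _ hε.ne', le_div_iff₀ hε]
  nlinarith [sq_nonneg (ε * b - a)]

theorem stmt19_general (d : ℕ) (g : EuclideanSpace ℝ (Fin d) → ℝ) (C ρ : ℝ)
    (hg_lip : ∀ x y : EuclideanSpace ℝ (Fin d), |g x - g y| ≤ C * ‖x - y‖)
    (b v : EuclideanSpace ℝ (Fin d))
    (hv : ∀ z, g z ≥ g b + ⟪v, z - b⟫ - ρ / 2 * ‖z - b‖ ^ 2) :
    ∀ (a z : EuclideanSpace ℝ (Fin d)) (M : ℝ), 0 < M →
      g a - g z - ⟪v, a - z⟫ ≤ 8 * C ^ 2 / M + M / 8 * ‖a - b‖ ^ 2 + ρ / 2 * ‖z - b‖ ^ 2 := by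
  intro a z M hM
  have h_lip_a : g a - g b ≤ C * ‖a - b‖ := (abs_le.mp (hg_lip a b)).2
  have h_inner : -⟪v, a - b⟫ ≤ C * ‖a - b‖ := by
    simpa [← inner_neg_right, norm_sub_rev] using
      inner_le_mul_norm_of_weak_subgradient (fun x => (abs_le.mp (hg_lip x b)).2) hv (b - a)
  have h_amgm : 2 * C * ‖a - b‖ ≤ 8 * C ^ 2 / M + M / 8 * ‖a - b‖ ^ 2 := by
    have := two_mul_le_sq_div_add_mul_sq (div_pos hM (by norm_num : (0 : ℝ) < 8)) C ‖a - b‖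
    rwa [div_div_eq_mul_div, mul_comm (C ^ 2)] at this
  have h_split : ⟪v, a - z⟫ = ⟪v, a - b⟫ - ⟪v, z - b⟫ := by
    rw [← inner_sub_right, sub_sub_sub_cancel_right]
  have h_sub_z := hv z
  linarith

/-- For `g` `C`-Lipschitz and `ρ`-weakly convex, and `v` a subgradient of `g` at
`b`, one has `g(a) − g(z) − ⟨v, a − z⟩ ≤ 8C²/M + (M/8)‖a − b‖² + (ρ/2)‖z − b‖²` for all
`a, z` and every `M > 0`. -/
theorem stmt19 (d : ℕ) (g : EuclideanSpace ℝ (Fin d) → ℝ) (C ρ : ℝ)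
    (hg_lip : ∀ x y : EuclideanSpace ℝ (Fin d), |g x - g y| ≤ C * ‖x - y‖)
    (hg_wc : ConvexOn ℝ Set.univ (fun x => g x + ρ / 2 * ‖x‖ ^ 2))
    (b v : EuclideanSpace ℝ (Fin d))
    (hv : ∀ z, g z ≥ g b + ⟪v, z - b⟫ - ρ / 2 * ‖z - b‖ ^ 2) :
    ∀ (a z : EuclideanSpace ℝ (Fin d)) (M : ℝ), 0 < M →
      g a - g z - ⟪v, a - z⟫ ≤ 8 * C ^ 2 / M + M / 8 * ‖a - b‖ ^ 2 + ρ / 2 * ‖z - b‖ ^ 2 :=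
  stmt19_general d g C ρ hg_lip b v hv
end
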